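/- arXiv:1004.2321 — 3 statements merged into one kernel-verified Lean document; each statement's English description precedes it below -/
import Mathlib

section
/- Let z_1,...,z_n be pairwise distinct elements of a field, 0 ≤ k ≤ n, and let A, C ⊆ {1,...,n} with |A| = |C| = k. Then Σ_{B ⊆ {1,...,n}, |B|=k} s_{λ(A)}(z_B) · s_{λ(C̄)}(z_{B̄}) · ε(w_{C̄}) / ∏_{i∈B, j∉B}(z_i − z_j) = δ_{A,C}, where z_B denotes the variables indexed by B, B̄ and C̄ denote complements, λ(·) is the partition associated to a subset, and s_λ is the Schur polynomial. -/
open Finset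
open Equiv

noncomputable def shufflePerm {n : ℕ} (B : Finset (Fin n)) : Equiv.Perm (Fin n) :=
  (finCongr (((Finset.card_add_card_compl B).trans (Fintype.card_fin n)).symm)).trans <|
  (finSumFinEquiv.symm).trans <|
  (Equiv.sumCongr (B.orderIsoOfFin rfl).toEquiv (Bᶜ.orderIsoOfFin rfl).toEquiv).trans <|
  (Equiv.sumCongr (Equiv.refl _) (Equiv.subtypeEquivRight (fun _ => Finset.mem_compl))).trans <|
  (Equiv.sumCompl (· ∈ B))

/-- The Schur polynomial `s_{λ(D)}` evaluated at the variables `z_E`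
(indexed by the subset `E`, with `|E| = |D|`), defined as a ratio of
determinants: `det(z_{E_j}^{D_i − 1}) / det(z_{E_j}^{i − 1})`
(here with zero-indexed elements of `Fin n`, so the exponents are the
values of the sorted elements of `D`, resp. `0,…,|D|−1`). -/
noncomputable def schurAt {F : Type*} [Field F] {n : ℕ} (z : Fin n → F)
    (D E : Finset (Fin n)) : F :=
  if h : E.card = D.card then
    Matrix.det (Matrix.of fun (i j : Fin D.card) =>
        z (E.orderEmbOfFin h j) ^ ((D.orderEmbOfFin rfl i : Fin n) : ℕ))
    / Matrix.det (Matrix.of fun (i j : Fin D.card) =>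
        z (E.orderEmbOfFin h j) ^ (i : ℕ))
  else 0

lemma card_compl_eq {n : ℕ} (B : Finset (Fin n)) : Bᶜ.card = n - B.card := by
  have := (Finset.card_add_card_compl B).trans (Fintype.card_fin n); omega

lemma shufflePerm_apply_lt {n : ℕ} (B : Finset (Fin n)) (x : Fin n) (h : (x:ℕ) < B.card) :
    shufflePerm B x = B.orderEmbOfFin rfl ⟨x, h⟩ := by
  have h1 : (finCongr (((Finset.card_add_card_compl B).trans (Fintype.card_fin n)).symm)) x
      = Fin.castAdd Bᶜ.card ⟨(x:ℕ), h⟩ := by ext; rfl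
  simp only [shufflePerm, trans_apply]
  rw [h1, finSumFinEquiv_symm_apply_castAdd]
  simp

lemma shufflePerm_apply_ge {n : ℕ} (B : Finset (Fin n)) (x : Fin n) (h : B.card ≤ (x:ℕ))
    (h2 : (x:ℕ) - B.card < Bᶜ.card) :
    shufflePerm B x = Bᶜ.orderEmbOfFin rfl ⟨(x:ℕ) - B.card, h2⟩ := by
  have h1 : (finCongr (((Finset.card_add_card_compl B).trans (Fintype.card_fin n)).symm)) x
      = Fin.natAdd B.card ⟨(x:ℕ) - B.card, h2⟩ := by ext; simp; omega
  simp only [shufflePerm, trans_apply]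
  rw [h1, finSumFinEquiv_symm_apply_natAdd]
  simp

lemma orderEmbOfFin_congr {n : ℕ} (s : Finset (Fin n)) {k₁ k₂ : ℕ} (h₁ : s.card = k₁)
    (h₂ : s.card = k₂) {i₁ : Fin k₁} {i₂ : Fin k₂} (h : (i₁:ℕ) = (i₂:ℕ)) :
    s.orderEmbOfFin h₁ i₁ = s.orderEmbOfFin h₂ i₂ := by
  subst h₁; subst h₂
  congr 1; exact Fin.ext h

def dEquiv (n k : ℕ) (hk : k ≤ n) : Fin k ⊕ Fin (n-k) ≃ Fin n :=
  finSumFinEquiv.trans (finCongr (by omega))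

@[simp] lemma dEquiv_inl_val {n k : ℕ} (hk : k ≤ n) (i : Fin k) :
    ((dEquiv n k hk (Sum.inl i)) : ℕ) = (i:ℕ) := rfl

@[simp] lemma dEquiv_inr_val {n k : ℕ} (hk : k ≤ n) (j : Fin (n-k)) :
    ((dEquiv n k hk (Sum.inr j)) : ℕ) = k + (j:ℕ) := rfl

lemma shufflePerm_dEquiv_inl {n k : ℕ} (hk : k ≤ n) (B : Finset (Fin n)) (hB : B.card = k)
    (i : Fin k) : shufflePerm B (dEquiv n k hk (Sum.inl i)) = B.orderEmbOfFin hB i := by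
  rw [shufflePerm_apply_lt _ _ (by simp [hB, i.2])]
  exact orderEmbOfFin_congr _ _ _ rfl

lemma shufflePerm_dEquiv_inr {n k : ℕ} (hk : k ≤ n) (B : Finset (Fin n)) (hB : B.card = k)
    (hBc : Bᶜ.card = n - k) (j : Fin (n-k)) :
    shufflePerm B (dEquiv n k hk (Sum.inr j)) = Bᶜ.orderEmbOfFin hBc j := by
  rw [shufflePerm_apply_ge _ _ (by simp [hB]) (by simp [hB, hBc])]
  exact orderEmbOfFin_congr _ _ _ (by simp [hB])

lemma image_orderEmbOfFin {n k : ℕ} (B : Finset (Fin n)) (hB : B.card = k) :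
    Finset.image (B.orderEmbOfFin hB) univ = B := by
  apply Finset.eq_of_subset_of_card_le
  · intro x hx
    simp only [Finset.mem_image] at hx
    obtain ⟨i, _, rfl⟩ := hx
    exact Finset.orderEmbOfFin_mem _ _ _
  · rw [Finset.card_image_of_injective _ (B.orderEmbOfFin hB).injective]
    simp [hB]

open Equiv.Perm in
noncomputable def phiPerm {n k : ℕ} (hk : k ≤ n) (B : Finset (Fin n))
    (p : Perm (Fin k) × Perm (Fin (n-k))) : Perm (Fin n) :=
  ((dEquiv n k hk).permCongr (Equiv.sumCongr p.1 p.2)).trans (shufflePerm B)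

lemma phiPerm_apply_inl {n k : ℕ} (hk : k ≤ n) (B : Finset (Fin n)) (hB : B.card = k)
    (p : Perm (Fin k) × Perm (Fin (n-k))) (i : Fin k) :
    phiPerm hk B p (dEquiv n k hk (Sum.inl i)) = B.orderEmbOfFin hB (p.1 i) := by
  simp only [phiPerm, trans_apply, permCongr_apply, Equiv.symm_apply_apply,
    Equiv.sumCongr_apply, Sum.map_inl]
  exact shufflePerm_dEquiv_inl hk B hB _

lemma phiPerm_apply_inr {n k : ℕ} (hk : k ≤ n) (B : Finset (Fin n)) (hB : B.card = k)
    (hBc : Bᶜ.card = n - k)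
    (p : Perm (Fin k) × Perm (Fin (n-k))) (j : Fin (n-k)) :
    phiPerm hk B p (dEquiv n k hk (Sum.inr j)) = Bᶜ.orderEmbOfFin hBc (p.2 j) := by
  simp only [phiPerm, trans_apply, permCongr_apply, Equiv.symm_apply_apply,
    Equiv.sumCongr_apply, Sum.map_inr]
  exact shufflePerm_dEquiv_inr hk B hB hBc _

lemma sign_phiPerm {n k : ℕ} (hk : k ≤ n) (B : Finset (Fin n))
    (p : Perm (Fin k) × Perm (Fin (n-k))) :
    Equiv.Perm.sign (phiPerm hk B p)
      = Equiv.Perm.sign (shufflePerm B) * Equiv.Perm.sign p.1 * Equiv.Perm.sign p.2 := by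
  have : phiPerm hk B p = (shufflePerm B) * ((dEquiv n k hk).permCongr (Equiv.sumCongr p.1 p.2)) := rfl
  rw [this, map_mul, Equiv.Perm.sign_permCongr, Equiv.Perm.sign_sumCongr, mul_assoc]

lemma image_phiPerm {n k : ℕ} (hk : k ≤ n) (B : Finset (Fin n)) (hB : B.card = k)
    (p : Perm (Fin k) × Perm (Fin (n-k))) :
    Finset.image (fun i : Fin k => phiPerm hk B p (dEquiv n k hk (Sum.inl i))) univ = B := by
  have h1 : (fun i : Fin k => phiPerm hk B p (dEquiv n k hk (Sum.inl i)))
      = (B.orderEmbOfFin hB) ∘ p.1 := by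
    funext i; exact phiPerm_apply_inl hk B hB p i
  rw [h1, ← Finset.image_image, Finset.image_univ_equiv p.1]
  exact image_orderEmbOfFin B hB

lemma prod_phiPerm {F : Type*} [Field F] {n k : ℕ} (hk : k ≤ n)
    (M : Matrix (Fin n) (Fin n) F) (B : Finset (Fin n)) (hB : B.card = k)
    (hBc : Bᶜ.card = n - k) (p : Perm (Fin k) × Perm (Fin (n-k))) :
    ∏ i, M i (phiPerm hk B p i)
      = (∏ i : Fin k, M (dEquiv n k hk (Sum.inl i)) (B.orderEmbOfFin hB (p.1 i)))
        * ∏ j : Fin (n-k), M (dEquiv n k hk (Sum.inr j)) (Bᶜ.orderEmbOfFin hBc (p.2 j)) := by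
  rw [← Equiv.prod_comp (dEquiv n k hk) (fun i => M i (phiPerm hk B p i)),
    Fintype.prod_sum_type]
  congr 1
  · exact Finset.prod_congr rfl fun i _ => by rw [phiPerm_apply_inl hk B hB]
  · exact Finset.prod_congr rfl fun j _ => by rw [phiPerm_apply_inr hk B hB hBc]

theorem laplace_expansion {F : Type*} [Field F] {n k : ℕ} (hk : k ≤ n)
    (M : Matrix (Fin n) (Fin n) F) :
    M.det = ∑ B ∈ powersetCard k (univ : Finset (Fin n)),
      if hB : B.card = k then
        ((Equiv.Perm.sign (shufflePerm B) : ℤ) : F)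
        * (Matrix.of fun i j : Fin k =>
            M (dEquiv n k hk (Sum.inl i)) (B.orderEmbOfFin hB j)).det
        * (Matrix.of fun i j : Fin (n-k) =>
            M (dEquiv n k hk (Sum.inr i)) (Bᶜ.orderEmbOfFin (by rw [card_compl_eq, hB]) j)).det
      else 0 := by
  have key : ∀ B ∈ powersetCard k (univ : Finset (Fin n)),
      (if hB : B.card = k then
        ((Equiv.Perm.sign (shufflePerm B) : ℤ) : F)
        * (Matrix.of fun i j : Fin k =>
            M (dEquiv n k hk (Sum.inl i)) (B.orderEmbOfFin hB j)).det
        * (Matrix.of fun i j : Fin (n-k) =>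
            M (dEquiv n k hk (Sum.inr i)) (Bᶜ.orderEmbOfFin (by rw [card_compl_eq, hB]) j)).det
      else 0)
      = ∑ p : Perm (Fin k) × Perm (Fin (n-k)),
          ((Equiv.Perm.sign (phiPerm hk B p) : ℤ) : F) * ∏ i, M i (phiPerm hk B p i) := by
    intro B hBmem
    have hB : B.card = k := (Finset.mem_powersetCard.mp hBmem).2
    have hBc : Bᶜ.card = n - k := by rw [card_compl_eq, hB]
    rw [dif_pos hB]
    have e1 : (Matrix.of fun i j : Fin k =>
        M (dEquiv n k hk (Sum.inl i)) (B.orderEmbOfFin hB j)).det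
        = ∑ τ : Perm (Fin k), ((Equiv.Perm.sign τ : ℤ) : F)
            * ∏ i, M (dEquiv n k hk (Sum.inl i)) (B.orderEmbOfFin hB (τ i)) := by
      rw [← Matrix.det_transpose, Matrix.det_apply']
      rfl
    have e2 : (Matrix.of fun i j : Fin (n-k) =>
        M (dEquiv n k hk (Sum.inr i)) (Bᶜ.orderEmbOfFin hBc j)).det
        = ∑ τ : Perm (Fin (n-k)), ((Equiv.Perm.sign τ : ℤ) : F)
            * ∏ i, M (dEquiv n k hk (Sum.inr i)) (Bᶜ.orderEmbOfFin hBc (τ i)) := by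
      rw [← Matrix.det_transpose, Matrix.det_apply']
      rfl
    rw [e1, e2, mul_assoc, Finset.sum_mul_sum, Finset.mul_sum]
    conv_rhs => rw [Fintype.sum_prod_type]
    refine Finset.sum_congr rfl fun τ₁ _ => ?_
    rw [Finset.mul_sum]
    refine Finset.sum_congr rfl fun τ₂ _ => ?_
    rw [prod_phiPerm hk M B hB hBc (τ₁, τ₂), sign_phiPerm hk B (τ₁, τ₂)]
    push_cast
    ring
  rw [Finset.sum_congr rfl key, Finset.sum_sigma']
  conv_lhs => rw [← Matrix.det_transpose M, Matrix.det_apply']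
  symm
  refine Finset.sum_bij (fun a _ => phiPerm hk a.1 a.2) (fun a _ => Finset.mem_univ _)
    ?_ ?_ ?_
  · -- injectivity
    rintro ⟨B, p⟩ ha ⟨B', p'⟩ ha' h
    simp only [Finset.mem_sigma, Finset.mem_powersetCard] at ha ha'
    have hB : B.card = k := ha.1.2
    have hB' : B'.card = k := ha'.1.2
    have hBB' : B = B' := by
      rw [← image_phiPerm hk B hB p, ← image_phiPerm hk B' hB' p']
      simp only [h]
    subst hBB'
    have hp1 : p.1 = p'.1 := by
      apply Equiv.ext; intro i
      have h2 := congrArg (fun σ : Perm (Fin n) => σ (dEquiv n k hk (Sum.inl i))) h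
      simp only [phiPerm_apply_inl hk B hB] at h2
      exact (B.orderEmbOfFin hB).injective h2
    have hp2 : p.2 = p'.2 := by
      have hBc : Bᶜ.card = n - k := by rw [card_compl_eq, hB]
      apply Equiv.ext; intro j
      have h2 := congrArg (fun σ : Perm (Fin n) => σ (dEquiv n k hk (Sum.inr j))) h
      simp only [phiPerm_apply_inr hk B hB hBc] at h2
      exact (Bᶜ.orderEmbOfFin hBc).injective h2
    exact congrArg (Sigma.mk B) (Prod.ext hp1 hp2)
  · -- surjectivity
    intro σ _
    set g0 : Fin k → Fin n := fun i => σ (dEquiv n k hk (Sum.inl i)) with hg0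
    have hg0inj : Function.Injective g0 :=
      σ.injective.comp ((dEquiv n k hk).injective.comp Sum.inl_injective)
    set B : Finset (Fin n) := Finset.image g0 univ with hBdef
    have hB : B.card = k := by
      rw [hBdef, Finset.card_image_of_injective _ hg0inj, card_univ, Fintype.card_fin]
    have hBc : Bᶜ.card = n - k := by rw [card_compl_eq, hB]
    have hmem1 : ∀ i, g0 i ∈ B := fun i => Finset.mem_image_of_mem _ (mem_univ i)
    have hmem2 : ∀ j : Fin (n-k), σ (dEquiv n k hk (Sum.inr j)) ∈ Bᶜ := by
      intro j
      rw [Finset.mem_compl]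
      intro hmem
      rw [hBdef, Finset.mem_image] at hmem
      obtain ⟨i, _, hi⟩ := hmem
      exact (by simp : ¬ (Sum.inl i = Sum.inr j))
        ((dEquiv n k hk).injective (σ.injective hi))
    have hbij1 : Function.Bijective
        (fun i : Fin k => (B.orderIsoOfFin hB).symm ⟨g0 i, hmem1 i⟩) := by
      apply Finite.injective_iff_bijective.mp
      intro a b hab
      apply hg0inj
      have := congrArg (fun x => ((B.orderIsoOfFin hB) x : Fin n)) hab
      simpa using this
    have hbij2 : Function.Bijective
        (fun j : Fin (n-k) => (Bᶜ.orderIsoOfFin hBc).symm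
          ⟨σ (dEquiv n k hk (Sum.inr j)), hmem2 j⟩) := by
      apply Finite.injective_iff_bijective.mp
      intro a b hab
      have := congrArg (fun x => ((Bᶜ.orderIsoOfFin hBc) x : Fin n)) hab
      simp only [OrderIso.apply_symm_apply] at this
      exact Sum.inr_injective ((dEquiv n k hk).injective (σ.injective this))
    refine ⟨⟨B, Equiv.ofBijective _ hbij1, Equiv.ofBijective _ hbij2⟩, ?_, ?_⟩
    · simp only [Finset.mem_sigma, Finset.mem_powersetCard]
      exact ⟨⟨Finset.subset_univ _, hB⟩, Finset.mem_univ _⟩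
    · apply Equiv.ext
      intro x
      obtain ⟨y, rfl⟩ := (dEquiv n k hk).surjective x
      cases y with
      | inl i =>
        rw [phiPerm_apply_inl hk B hB]
        show B.orderEmbOfFin hB ((B.orderIsoOfFin hB).symm ⟨g0 i, hmem1 i⟩) = _
        rw [← Finset.coe_orderIsoOfFin_apply, OrderIso.apply_symm_apply]
      | inr j =>
        rw [phiPerm_apply_inr hk B hB hBc]
        show Bᶜ.orderEmbOfFin hBc ((Bᶜ.orderIsoOfFin hBc).symm ⟨_, hmem2 j⟩) = _
        rw [← Finset.coe_orderIsoOfFin_apply, OrderIso.apply_symm_apply]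
  · -- summand equality
    rintro ⟨B, p⟩ ha
    rfl

lemma Ioi_dEquiv_inl {n k : ℕ} (hk : k ≤ n) (a : Fin k) :
    Finset.Ioi (dEquiv n k hk (Sum.inl a))
      = ((Finset.Ioi a).image (fun x : Fin k => dEquiv n k hk (Sum.inl x)))
        ∪ (univ.image (fun y : Fin (n-k) => dEquiv n k hk (Sum.inr y))) := by
  ext x
  simp only [Finset.mem_Ioi, Finset.mem_union, Finset.mem_image, Finset.mem_univ, true_and]
  constructor
  · intro hx
    rw [Fin.lt_def, dEquiv_inl_val] at hx
    by_cases hxk : (x : ℕ) < k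
    · exact Or.inl ⟨⟨x, hxk⟩, by rwa [Fin.lt_def], Fin.ext (by simp)⟩
    · exact Or.inr ⟨⟨(x : ℕ) - k, by omega⟩, Fin.ext (by simp; omega)⟩
  · rintro (⟨w, hw, rfl⟩ | ⟨y, rfl⟩)
    · rw [Fin.lt_def, dEquiv_inl_val, dEquiv_inl_val]
      rwa [Fin.lt_def] at hw
    · rw [Fin.lt_def, dEquiv_inl_val, dEquiv_inr_val]
      omega
lemma Ioi_dEquiv_inr {n k : ℕ} (hk : k ≤ n) (b : Fin (n-k)) :
    Finset.Ioi (dEquiv n k hk (Sum.inr b))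
      = (Finset.Ioi b).image (fun y : Fin (n-k) => dEquiv n k hk (Sum.inr y)) := by
  ext x
  simp only [Finset.mem_Ioi, Finset.mem_image]
  constructor
  · intro hx
    rw [Fin.lt_def, dEquiv_inr_val] at hx
    refine ⟨⟨(x:ℕ) - k, by omega⟩, by rw [Fin.lt_def]; simp; omega, Fin.ext (by simp; omega)⟩
  · rintro ⟨y, hy, rfl⟩
    rw [Fin.lt_def, dEquiv_inr_val, dEquiv_inr_val]
    rw [Fin.lt_def] at hy
    omega

lemma prod_Ioi_split {F : Type*} [CommRing F] {n k : ℕ} (hk : k ≤ n) (f : Fin n → Fin n → F) :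
    ∏ i : Fin n, ∏ j ∈ Finset.Ioi i, f i j
    = (∏ i : Fin k, ∏ j ∈ Finset.Ioi i, f (dEquiv n k hk (Sum.inl i)) (dEquiv n k hk (Sum.inl j)))
      * (∏ i : Fin (n-k), ∏ j ∈ Finset.Ioi i,
          f (dEquiv n k hk (Sum.inr i)) (dEquiv n k hk (Sum.inr j)))
      * ∏ i : Fin k, ∏ j : Fin (n-k), f (dEquiv n k hk (Sum.inl i)) (dEquiv n k hk (Sum.inr j)) := by
  rw [← Equiv.prod_comp (dEquiv n k hk) (fun i => ∏ j ∈ Finset.Ioi i, f i j),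
    Fintype.prod_sum_type]
  have h1 : ∀ a : Fin k, ∏ j ∈ Finset.Ioi (dEquiv n k hk (Sum.inl a)),
      f (dEquiv n k hk (Sum.inl a)) j
      = (∏ j ∈ Finset.Ioi a, f (dEquiv n k hk (Sum.inl a)) (dEquiv n k hk (Sum.inl j)))
        * ∏ j : Fin (n-k), f (dEquiv n k hk (Sum.inl a)) (dEquiv n k hk (Sum.inr j)) := by
    intro a
    rw [Ioi_dEquiv_inl hk a, Finset.prod_union, Finset.prod_image, Finset.prod_image]
    · intro x _ y _ h; exact Sum.inr_injective ((dEquiv n k hk).injective h)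
    · intro x _ y _ h; exact Sum.inl_injective ((dEquiv n k hk).injective h)
    · rw [Finset.disjoint_left]
      rintro x hx hy
      simp only [Finset.mem_image] at hx hy
      obtain ⟨w, _, rfl⟩ := hx
      obtain ⟨y, _, hy⟩ := hy
      exact (by simp : ¬ (Sum.inr y = Sum.inl w)) ((dEquiv n k hk).injective hy)
  have h2 : ∀ b : Fin (n-k), ∏ j ∈ Finset.Ioi (dEquiv n k hk (Sum.inr b)),
      f (dEquiv n k hk (Sum.inr b)) j
      = ∏ j ∈ Finset.Ioi b, f (dEquiv n k hk (Sum.inr b)) (dEquiv n k hk (Sum.inr j)) := by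
    intro b
    rw [Ioi_dEquiv_inr hk b, Finset.prod_image]
    intro x _ y _ h; exact Sum.inr_injective ((dEquiv n k hk).injective h)
  rw [Finset.prod_congr rfl (fun a _ => h1 a), Finset.prod_congr rfl (fun b _ => h2 b),
    Finset.prod_mul_distrib]
  ring

lemma prod_finset_eq {M : Type*} [CommMonoid M] {n k : ℕ} (s : Finset (Fin n))
    (h : s.card = k) (H : Fin n → M) :
    ∏ i ∈ s, H i = ∏ a : Fin k, H (s.orderEmbOfFin h a) := by
  conv_lhs => rw [← image_orderEmbOfFin s h]
  exact Finset.prod_image (fun x _ y _ hxy => (s.orderEmbOfFin h).injective hxy)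

lemma prod_pairs_B {F : Type*} [CommRing F] {n k : ℕ} (z : Fin n → F)
    (B : Finset (Fin n)) (hB : B.card = k) (hBc : Bᶜ.card = n - k) :
    ∏ i ∈ B, ∏ j ∈ Bᶜ, (z i - z j)
      = ∏ i : Fin k, ∏ j : Fin (n-k), (z (B.orderEmbOfFin hB i) - z (Bᶜ.orderEmbOfFin hBc j)) := by
  rw [prod_finset_eq B hB]
  exact Finset.prod_congr rfl fun i _ => prod_finset_eq Bᶜ hBc _

lemma vandermonde_split {F : Type*} [Field F] {n k : ℕ} (hk : k ≤ n) (z : Fin n → F)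
    (B : Finset (Fin n)) (hB : B.card = k) (hBc : Bᶜ.card = n - k) :
    ((Equiv.Perm.sign (shufflePerm B) : ℤ) : F) * ∏ i : Fin n, ∏ j ∈ Finset.Ioi i, (z j - z i)
    = (∏ i : Fin k, ∏ j ∈ Finset.Ioi i,
        (z (B.orderEmbOfFin hB j) - z (B.orderEmbOfFin hB i)))
      * (∏ i : Fin (n-k), ∏ j ∈ Finset.Ioi i,
          (z (Bᶜ.orderEmbOfFin hBc j) - z (Bᶜ.orderEmbOfFin hBc i)))
      * ((-1)^(k*(n-k)) * ∏ i ∈ B, ∏ j ∈ Bᶜ, (z i - z j)) := by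
  have hsub : Matrix.vandermonde (fun i => z (shufflePerm B i))
      = (Matrix.vandermonde z).submatrix (shufflePerm B) id := by
    ext i j; simp [Matrix.vandermonde]
  have hdet := congrArg Matrix.det hsub
  rw [Matrix.det_permute, Matrix.det_vandermonde, Matrix.det_vandermonde] at hdet
  rw [show ((Equiv.Perm.sign (shufflePerm B) : ℤ) : F) * ∏ i : Fin n, ∏ j ∈ Finset.Ioi i, (z j - z i)
      = ∏ i : Fin n, ∏ j ∈ Finset.Ioi i, (z (shufflePerm B j) - z (shufflePerm B i)) from hdet.symm]
  rw [prod_Ioi_split hk (fun i j => z (shufflePerm B j) - z (shufflePerm B i))]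
  congr 1
  · congr 1
    · exact Finset.prod_congr rfl fun i _ => Finset.prod_congr rfl fun j _ => by
        rw [shufflePerm_dEquiv_inl hk B hB, shufflePerm_dEquiv_inl hk B hB]
    · exact Finset.prod_congr rfl fun i _ => Finset.prod_congr rfl fun j _ => by
        rw [shufflePerm_dEquiv_inr hk B hB hBc, shufflePerm_dEquiv_inr hk B hB hBc]
  · rw [prod_pairs_B z B hB hBc]
    have h3 : ∀ i : Fin k, ∏ j : Fin (n-k),
        (z (shufflePerm B (dEquiv n k hk (Sum.inr j)))
          - z (shufflePerm B (dEquiv n k hk (Sum.inl i))))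
        = (-1)^(n-k) * ∏ j : Fin (n-k),
            (z (B.orderEmbOfFin hB i) - z (Bᶜ.orderEmbOfFin hBc j)) := by
      intro i
      have : ∀ j : Fin (n-k),
          z (shufflePerm B (dEquiv n k hk (Sum.inr j)))
            - z (shufflePerm B (dEquiv n k hk (Sum.inl i)))
          = (-1) * (z (B.orderEmbOfFin hB i) - z (Bᶜ.orderEmbOfFin hBc j)) := by
        intro j
        rw [shufflePerm_dEquiv_inl hk B hB, shufflePerm_dEquiv_inr hk B hB hBc]
        ring
      rw [Finset.prod_congr rfl fun j _ => this j, Finset.prod_mul_distrib,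
        Finset.prod_const, Finset.card_univ, Fintype.card_fin]
    rw [Finset.prod_congr rfl fun i _ => h3 i, Finset.prod_mul_distrib, Finset.prod_const,
      Finset.card_univ, Fintype.card_fin, ← pow_mul, Nat.mul_comm]

lemma prodIoi_congr {F : Type*} [CommRing F] {n : ℕ} (z : Fin n → F) (s t : Finset (Fin n))
    (hst : s = t) {k₁ k₂ : ℕ} (h₁ : s.card = k₁) (h₂ : t.card = k₂) :
    ∏ i : Fin k₁, ∏ j ∈ Finset.Ioi i, (z (s.orderEmbOfFin h₁ j) - z (s.orderEmbOfFin h₁ i))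
      = ∏ i : Fin k₂, ∏ j ∈ Finset.Ioi i, (z (t.orderEmbOfFin h₂ j) - z (t.orderEmbOfFin h₂ i)) := by
  subst hst
  have : k₁ = k₂ := h₁.symm.trans h₂
  subst this
  rfl

lemma prod_swap_neg {F : Type*} [CommRing F] {n : ℕ} (z : Fin n → F) (s t : Finset (Fin n)) :
    ∏ i ∈ s, ∏ j ∈ t, (z i - z j)
      = (-1)^(s.card * t.card) * ∏ i ∈ t, ∏ j ∈ s, (z i - z j) := by
  rw [Finset.prod_comm]
  have : ∀ j ∈ t, ∏ i ∈ s, (z i - z j) = (-1)^s.card * ∏ i ∈ s, (z j - z i) := by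
    intro j _
    rw [← Finset.prod_const, ← Finset.prod_mul_distrib]
    exact Finset.prod_congr rfl fun i _ => by ring
  rw [Finset.prod_congr rfl this, Finset.prod_mul_distrib, Finset.prod_const, ← pow_mul,
    Nat.mul_comm]

lemma prodIoi_ne_zero {F : Type*} [Field F] {m : ℕ} (w : Fin m → F) (hw : Function.Injective w) :
    ∏ i : Fin m, ∏ j ∈ Finset.Ioi i, (w j - w i) ≠ 0 := by
  rw [Finset.prod_ne_zero_iff]
  intro i _
  rw [Finset.prod_ne_zero_iff]
  intro j hj
  rw [Finset.mem_Ioi] at hj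
  exact sub_ne_zero_of_ne (fun h => absurd (hw h) (ne_of_gt hj))


/-- for pairwise distinct `z₁,…,z_n` and `k`-subsets `A, C`,
`Σ_{|B|=k} s_{λ(A)}(z_B) s_{λ(C̄)}(z_{B̄}) ε(w_{C̄}) / ∏_{i∈B,j∉B}(z_i−z_j) = δ_{A,C}`. -/
theorem schur_orthogonality {F : Type*} [Field F] (n k : ℕ) (hk : k ≤ n)
    (z : Fin n → F) (hz : Function.Injective z)
    (A C : Finset (Fin n)) (hA : A.card = k) (hC : C.card = k) :
    (∑ B ∈ Finset.powersetCard k (Finset.univ : Finset (Fin n)),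
        schurAt z A B * schurAt z Cᶜ Bᶜ * ((Equiv.Perm.sign (shufflePerm Cᶜ) : ℤ) : F)
          / ∏ i ∈ B, ∏ j ∈ Bᶜ, (z i - z j))
      = if A = C then 1 else 0 := by
  have hCc : Cᶜ.card = n - k := by rw [card_compl_eq, hC]
  set Δ : F := ∏ i : Fin n, ∏ j ∈ Finset.Ioi i, (z j - z i) with hΔdef
  have hΔ : Δ ≠ 0 := prodIoi_ne_zero z hz
  set εC : F := ((Equiv.Perm.sign (shufflePerm Cᶜ) : ℤ) : F) with hεC
  set c : F := εC * (-1)^(k*(n-k)) * Δ⁻¹ with hc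
  set eExp : Fin n → ℕ := fun i => Sum.elim
      (fun a : Fin k => ((A.orderEmbOfFin hA a : Fin n) : ℕ))
      (fun b : Fin (n-k) => ((Cᶜ.orderEmbOfFin hCc b : Fin n) : ℕ))
      ((dEquiv n k hk).symm i) with heExp
  set N : Matrix (Fin n) (Fin n) F := Matrix.of (fun i j => z j ^ eExp i) with hN
  have heExp_inl : ∀ a : Fin k, eExp (dEquiv n k hk (Sum.inl a))
      = ((A.orderEmbOfFin hA a : Fin n) : ℕ) := by
    intro a; rw [heExp]; simp
  have heExp_inr : ∀ b : Fin (n-k), eExp (dEquiv n k hk (Sum.inr b))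
      = ((Cᶜ.orderEmbOfFin hCc b : Fin n) : ℕ) := by
    intro b; rw [heExp]; simp
  have step : ∀ B ∈ Finset.powersetCard k (Finset.univ : Finset (Fin n)),
      schurAt z A B * schurAt z Cᶜ Bᶜ * εC / ∏ i ∈ B, ∏ j ∈ Bᶜ, (z i - z j)
      = c * (if hB : B.card = k then
          ((Equiv.Perm.sign (shufflePerm B) : ℤ) : F)
          * (Matrix.of fun i j : Fin k =>
              N (dEquiv n k hk (Sum.inl i)) (B.orderEmbOfFin hB j)).det
          * (Matrix.of fun i j : Fin (n-k) =>
              N (dEquiv n k hk (Sum.inr i)) (Bᶜ.orderEmbOfFin (by rw [card_compl_eq, hB]) j)).det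
        else 0) := by
    intro B hBmem
    have hB : B.card = k := (Finset.mem_powersetCard.mp hBmem).2
    have hBc : Bᶜ.card = n - k := by rw [card_compl_eq, hB]
    rw [dif_pos hB]
    show schurAt z A B * schurAt z Cᶜ Bᶜ * εC / ∏ i ∈ B, ∏ j ∈ Bᶜ, (z i - z j)
      = c * (((Equiv.Perm.sign (shufflePerm B) : ℤ) : F)
          * (Matrix.of fun i j : Fin k =>
              N (dEquiv n k hk (Sum.inl i)) (B.orderEmbOfFin hB j)).det
          * (Matrix.of fun i j : Fin (n-k) =>
              N (dEquiv n k hk (Sum.inr i)) (Bᶜ.orderEmbOfFin hBc j)).det)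
    have hBA : B.card = A.card := by rw [hB, hA]
    have hBcCc : Bᶜ.card = Cᶜ.card := by rw [hBc, hCc]
    have hs1 : schurAt z A B
        = Matrix.det (Matrix.of fun (i j : Fin A.card) =>
            z (B.orderEmbOfFin hBA j) ^ ((A.orderEmbOfFin rfl i : Fin n) : ℕ))
          / Matrix.det (Matrix.of fun (i j : Fin A.card) =>
            z (B.orderEmbOfFin hBA j) ^ (i : ℕ)) := dif_pos hBA
    have hs2 : schurAt z Cᶜ Bᶜ
        = Matrix.det (Matrix.of fun (i j : Fin Cᶜ.card) =>
            z (Bᶜ.orderEmbOfFin hBcCc j) ^ ((Cᶜ.orderEmbOfFin rfl i : Fin n) : ℕ))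
          / Matrix.det (Matrix.of fun (i j : Fin Cᶜ.card) =>
            z (Bᶜ.orderEmbOfFin hBcCc j) ^ (i : ℕ)) := dif_pos hBcCc
    have hnum1 : Matrix.det (Matrix.of fun (i j : Fin A.card) =>
        z (B.orderEmbOfFin hBA j) ^ ((A.orderEmbOfFin rfl i : Fin n) : ℕ))
        = (Matrix.of fun i j : Fin k =>
            N (dEquiv n k hk (Sum.inl i)) (B.orderEmbOfFin hB j)).det := by
      rw [← Matrix.det_submatrix_equiv_self (finCongr hA) (Matrix.of fun i j : Fin k =>
        N (dEquiv n k hk (Sum.inl i)) (B.orderEmbOfFin hB j))]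
      congr 1
      ext i j
      simp only [Matrix.of_apply, Matrix.submatrix_apply, hN]
      rw [heExp_inl]
      rw [orderEmbOfFin_congr B hBA hB (i₂ := finCongr hA j) rfl,
        orderEmbOfFin_congr A rfl hA (i₂ := finCongr hA i) rfl]
    have hnum2 : Matrix.det (Matrix.of fun (i j : Fin Cᶜ.card) =>
        z (Bᶜ.orderEmbOfFin hBcCc j) ^ ((Cᶜ.orderEmbOfFin rfl i : Fin n) : ℕ))
        = (Matrix.of fun i j : Fin (n-k) =>
            N (dEquiv n k hk (Sum.inr i)) (Bᶜ.orderEmbOfFin hBc j)).det := by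
      rw [← Matrix.det_submatrix_equiv_self (finCongr hCc) (Matrix.of fun i j : Fin (n-k) =>
        N (dEquiv n k hk (Sum.inr i)) (Bᶜ.orderEmbOfFin hBc j))]
      congr 1
      ext i j
      simp only [Matrix.of_apply, Matrix.submatrix_apply, hN]
      rw [heExp_inr]
      rw [orderEmbOfFin_congr Bᶜ hBcCc hBc (i₂ := finCongr hCc j) rfl,
        orderEmbOfFin_congr Cᶜ rfl hCc (i₂ := finCongr hCc i) rfl]
    have hden1 : Matrix.det (Matrix.of fun (i j : Fin A.card) =>
        z (B.orderEmbOfFin hBA j) ^ (i : ℕ))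
        = ∏ i : Fin k, ∏ j ∈ Finset.Ioi i,
            (z (B.orderEmbOfFin hB j) - z (B.orderEmbOfFin hB i)) := by
      rw [← Matrix.det_transpose]
      have h2 : (Matrix.of fun (i j : Fin A.card) =>
          z (B.orderEmbOfFin hBA j) ^ (i : ℕ)).transpose
          = Matrix.vandermonde (fun i : Fin A.card => z (B.orderEmbOfFin hBA i)) := by
        ext i j; simp [Matrix.vandermonde]
      rw [h2, Matrix.det_vandermonde]
      exact prodIoi_congr z B B rfl hBA hB
    have hden2 : Matrix.det (Matrix.of fun (i j : Fin Cᶜ.card) =>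
        z (Bᶜ.orderEmbOfFin hBcCc j) ^ (i : ℕ))
        = ∏ i : Fin (n-k), ∏ j ∈ Finset.Ioi i,
            (z (Bᶜ.orderEmbOfFin hBc j) - z (Bᶜ.orderEmbOfFin hBc i)) := by
      rw [← Matrix.det_transpose]
      have h2 : (Matrix.of fun (i j : Fin Cᶜ.card) =>
          z (Bᶜ.orderEmbOfFin hBcCc j) ^ (i : ℕ)).transpose
          = Matrix.vandermonde (fun i : Fin Cᶜ.card => z (Bᶜ.orderEmbOfFin hBcCc i)) := by
        ext i j; simp [Matrix.vandermonde]
      rw [h2, Matrix.det_vandermonde]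
      exact prodIoi_congr z Bᶜ Bᶜ rfl hBcCc hBc
    rw [hs1, hs2, hnum1, hnum2, hden1, hden2, hc]
    have i1 := vandermonde_split hk z B hB hBc
    have hD1 : (∏ i : Fin k, ∏ j ∈ Finset.Ioi i,
        (z (B.orderEmbOfFin hB j) - z (B.orderEmbOfFin hB i))) ≠ 0 :=
      prodIoi_ne_zero (fun i => z (B.orderEmbOfFin hB i))
        (hz.comp (B.orderEmbOfFin hB).injective)
    have hD2 : (∏ i : Fin (n-k), ∏ j ∈ Finset.Ioi i,
        (z (Bᶜ.orderEmbOfFin hBc j) - z (Bᶜ.orderEmbOfFin hBc i))) ≠ 0 :=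
      prodIoi_ne_zero (fun i => z (Bᶜ.orderEmbOfFin hBc i))
        (hz.comp (Bᶜ.orderEmbOfFin hBc).injective)
    have hPB : (∏ i ∈ B, ∏ j ∈ Bᶜ, (z i - z j)) ≠ 0 := by
      rw [Finset.prod_ne_zero_iff]
      intro i hi
      rw [Finset.prod_ne_zero_iff]
      intro j hj
      apply sub_ne_zero_of_ne
      intro h
      exact (Finset.mem_compl.mp hj) (hz h ▸ hi)
    have hsB2 : ((Equiv.Perm.sign (shufflePerm B) : ℤ) : F)
        * ((Equiv.Perm.sign (shufflePerm B) : ℤ) : F) = 1 := by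
      rw [← Int.cast_mul, ← Units.val_mul, Int.units_mul_self, Units.val_one, Int.cast_one]
    have hm2 : ((-1 : F)^(k*(n-k))) * ((-1 : F)^(k*(n-k))) = 1 := by
      rw [← pow_add]
      exact Even.neg_one_pow ⟨k*(n-k), rfl⟩
    set a : F := ((Equiv.Perm.sign (shufflePerm B) : ℤ) : F) with ha
    set m : F := (-1 : F)^(k*(n-k)) with hm
    set M1 : F := (Matrix.of fun i j : Fin k =>
        N (dEquiv n k hk (Sum.inl i)) (B.orderEmbOfFin hB j)).det with hM1
    set M2 : F := (Matrix.of fun i j : Fin (n-k) =>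
        N (dEquiv n k hk (Sum.inr i)) (Bᶜ.orderEmbOfFin hBc j)).det with hM2
    set D1 : F := ∏ i : Fin k, ∏ j ∈ Finset.Ioi i,
        (z (B.orderEmbOfFin hB j) - z (B.orderEmbOfFin hB i)) with hD1d
    set D2 : F := ∏ i : Fin (n-k), ∏ j ∈ Finset.Ioi i,
        (z (Bᶜ.orderEmbOfFin hBc j) - z (Bᶜ.orderEmbOfFin hBc i)) with hD2d
    set P : F := ∏ i ∈ B, ∏ j ∈ Bᶜ, (z i - z j) with hPd
    have hrel : D1 * D2 * P = a * m * Δ := by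
      linear_combination (-(m))*i1 - D1*D2*P*hm2
    have ha0 : a ≠ 0 := left_ne_zero_of_mul_eq_one hsB2
    have hm0 : m ≠ 0 := left_ne_zero_of_mul_eq_one hm2
    have hinv : Δ⁻¹ * Δ = 1 := inv_mul_cancel₀ hΔ
    rw [div_mul_div_comm, div_mul_eq_mul_div, div_div, hrel,
      div_eq_iff (mul_ne_zero (mul_ne_zero ha0 hm0) hΔ)]
    linear_combination (-(M1*M2*εC))*hsB2 + (-(M1*M2*εC*a*a))*hm2
      + (-(M1*M2*εC*a*a*m*m))*hinv
  rw [Finset.sum_congr rfl step, ← Finset.mul_sum]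
  have hlap : (∑ B ∈ Finset.powersetCard k (Finset.univ : Finset (Fin n)),
      (if hB : B.card = k then
          ((Equiv.Perm.sign (shufflePerm B) : ℤ) : F)
          * (Matrix.of fun i j : Fin k =>
              N (dEquiv n k hk (Sum.inl i)) (B.orderEmbOfFin hB j)).det
          * (Matrix.of fun i j : Fin (n-k) =>
              N (dEquiv n k hk (Sum.inr i)) (Bᶜ.orderEmbOfFin (by rw [card_compl_eq, hB]) j)).det
        else 0)) = N.det := (laplace_expansion hk N).symm
  rw [hlap]
  by_cases hAC : A = C
  · subst hAC
    rw [if_pos rfl]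
    -- N is a row permutation of the full Vandermonde-type matrix
    have hW : N = (Matrix.of fun (i j : Fin n) => z j ^ (i:ℕ)).submatrix (shufflePerm A) id := by
      ext i j
      rw [hN]
      simp only [Matrix.of_apply, Matrix.submatrix_apply, id]
      congr 1
      obtain ⟨y, rfl⟩ := (dEquiv n k hk).surjective i
      cases y with
      | inl a => rw [heExp_inl a, shufflePerm_dEquiv_inl hk A hA]
      | inr b => rw [heExp_inr b, shufflePerm_dEquiv_inr hk A hA hCc]
    have hdetW : (Matrix.of fun (i j : Fin n) => z j ^ (i:ℕ)).det = Δ := by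
      rw [← Matrix.det_transpose]
      have h2 : (Matrix.of fun (i j : Fin n) => z j ^ (i:ℕ)).transpose = Matrix.vandermonde z := by
        ext i j; simp [Matrix.vandermonde]
      rw [h2, Matrix.det_vandermonde, hΔdef]
    rw [hW]
    rw [Matrix.det_permute]
    rw [hdetW]
    have hAcc : Aᶜᶜ.card = n - (n-k) := by rw [compl_compl, hA]; omega
    have i1 := vandermonde_split hk z A hA hCc
    have i2 := vandermonde_split (Nat.sub_le n k) z Aᶜ hCc hAcc
    rw [prodIoi_congr z Aᶜᶜ A (compl_compl A) hAcc hA] at i2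
    rw [compl_compl] at i2
    rw [prod_swap_neg z Aᶜ A] at i2
    rw [hCc, hA] at i2
    rw [show n - (n-k) = k from by omega, show (n-k)*k = k*(n-k) from Nat.mul_comm _ _] at i2
    set a : F := ((Equiv.Perm.sign (shufflePerm A) : ℤ) : F) with ha
    set m : F := (-1 : F)^(k*(n-k)) with hm
    set DA : F := ∏ i : Fin k, ∏ j ∈ Finset.Ioi i,
      (z (A.orderEmbOfFin hA j) - z (A.orderEmbOfFin hA i)) with hDA
    set DAc : F := ∏ i : Fin (n-k), ∏ j ∈ Finset.Ioi i,
      (z (Aᶜ.orderEmbOfFin hCc j) - z (Aᶜ.orderEmbOfFin hCc i)) with hDAc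
    set PA : F := ∏ i ∈ A, ∏ j ∈ Aᶜ, (z i - z j) with hPA
    have hb2 : εC * εC = 1 := by
      rw [hεC, ← Int.cast_mul, ← Units.val_mul, Int.units_mul_self, Units.val_one, Int.cast_one]
    have ha2 : a * a = 1 := by
      rw [ha, ← Int.cast_mul, ← Units.val_mul, Int.units_mul_self, Units.val_one, Int.cast_one]
    have hm2 : m * m = 1 := by
      rw [hm, ← pow_add]
      exact Even.neg_one_pow ⟨k*(n-k), rfl⟩
    have e2' : εC * Δ = DA * DAc * PA := by linear_combination i2 + (DAc*DA*PA)*hm2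
    have e1' : a * Δ = m * (εC * Δ) := by linear_combination i1 - m*e2'
    have hss : εC * a = m := by
      apply mul_right_cancel₀ hΔ
      linear_combination εC*e1' + m*Δ*hb2
    rw [hc]
    have hfin : εC * m * Δ⁻¹ * (a * Δ) = (εC * a) * m * (Δ⁻¹ * Δ) := by ring
    rw [hfin, inv_mul_cancel₀ hΔ, mul_one, hss]
    exact hm2
  · rw [if_neg hAC]
    have hdet0 : N.det = 0 := by
      obtain ⟨x, hxA, hxC⟩ : ∃ x, x ∈ A ∧ x ∉ C := by
        by_contra h
        push_neg at h
        exact hAC (Finset.eq_of_subset_of_card_le (fun y hy => h y hy) (by rw [hA, hC]))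
      have hxA' : x ∈ Finset.image (A.orderEmbOfFin hA) univ := by
        rw [image_orderEmbOfFin A hA]; exact hxA
      obtain ⟨i0, _, hi0⟩ := Finset.mem_image.mp hxA'
      have hxC' : x ∈ Finset.image (Cᶜ.orderEmbOfFin hCc) univ := by
        rw [image_orderEmbOfFin Cᶜ hCc]; exact Finset.mem_compl.mpr hxC
      obtain ⟨j0, _, hj0⟩ := Finset.mem_image.mp hxC'
      apply Matrix.det_zero_of_row_eq (i := dEquiv n k hk (Sum.inl i0))
        (j := dEquiv n k hk (Sum.inr j0))
      · intro h
        exact (by simp : ¬ (Sum.inl i0 = Sum.inr j0)) ((dEquiv n k hk).injective h)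
      · funext y
        rw [hN]
        simp only [Matrix.of_apply]
        rw [heExp_inl, heExp_inr, hi0, hj0]
    rw [hdet0, mul_zero]
end

section
/- Let V be a finite-dimensional graded vector space V = ⊕_{k=0}^{N} G_k with grades forming a symmetric unimodal sequence of dimensions, and let X: V → V be a nilpotent operator with X(G_k) ⊆ G_{k+1} that is part of an 𝔰𝔩_2-triple (X, Y, H) where H acts on G_k by the scalar 2k − N. Suppose ψ: V → V is a linear map satisfying ψ(F_k) ⊆ F_{k+1} for the filtration F_k = ⊕_{ℓ≥k} G_ℓ, and π_{k+1} ∘ ψ ∘ π_k = c · X for all k, where c ∈ ℂ, c ≠ 0, and π_k is the projection onto G_k. Then the Jordan block sizes (with multiplicities) of ψ coincide with those of X. -/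
/-!
Write `F_k = ⨁_{ℓ ≥ k} G_ℓ` (`tailSup G k`). Since the leading part of `ψ^s` is `c^s X^s`, the
image `ψ^s(F_k)` exceeds `ψ^s(F_{k+1})` by at least `dim X^s(G_k)` dimensions, whence
`rank X^s ≤ rank ψ^s`. Conversely, every map raising the filtration by `s` has rank at most
`dim G_0 + ⋯ + dim G_{n-1} + dim F_{n+s}`, and for `n ≈ (N - s) / 2` the operator `X^s` attains
this bound: by 𝔰𝔩₂-theory `X^s` is injective on `G_k` when `2k + s ≤ N`, and by hard Lefschetz
together with the symmetry of the dimensions it maps `G_k` onto `G_{k+s}` when `2k + s ≥ N`.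
-/

open Module

lemma lower_mul_raise_pow_succ {A : Type*} [Ring A] {X Y H : A} (hHX : H * X - X * H = 2 * X)
    (hXY : X * Y - Y * X = H) (n : ℕ) :
    Y * X ^ (n + 1) = X ^ (n + 1) * Y - (n + 1) • (X ^ n * H + n • X ^ n) := by
  have hYX : Y * X = X * Y - H := by rw [← hXY]; abel
  have hHX' : H * X = X * H + 2 * X := by rw [← hHX]; abel
  induction n with
  | zero => simp [hYX]
  | succ n ih =>
    rw [pow_succ X (n + 1), ← mul_assoc, ih]
    simp only [sub_mul, add_mul, mul_assoc, hYX, hHX', smul_mul_assoc, pow_succ, two_mul, mul_add,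
      mul_sub]
    module

section

variable {K V : Type*} [Field K] [AddCommGroup V] [Module K V]

lemma Module.End.eigenspace_le_iSup {ι : Type*} {G : ι → Submodule K V} (hG : ⨆ i, G i = ⊤)
    {H : Module.End K V} {w : ι → K} (hH : ∀ i, G i ≤ H.eigenspace (w i)) (μ : K) :
    H.eigenspace μ ≤ ⨆ (i) (_ : w i = μ), G i := by
  have hdisj : Disjoint (⨆ (i) (_ : w i ≠ μ), G i) (H.eigenspace μ) := by
    refine (H.eigenspaces_iSupIndep.disjoint_biSup (y := {μ}ᶜ) (by simp)).symm.mono_left ?_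
    exact iSup₂_le fun i hi => le_iSup₂_of_le (w i) hi (hH i)
  conv_lhs => rw [← top_inf_eq (H.eigenspace μ), ← hG, iSup_split G (fun i => w i = μ)]
  rw [sup_inf_assoc_of_le _ (iSup₂_le fun i hi => hi ▸ hH i), hdisj.eq_bot, sup_bot_eq]

lemma finrank_map_eq_of_disjoint_ker {W : Type*} [AddCommGroup W] [Module K W] {f : V →ₗ[K] W}
    {p : Submodule K V} (h : Disjoint p (LinearMap.ker f)) : finrank K (p.map f) = finrank K p := by
  rw [← LinearMap.range_domRestrict]
  exact LinearMap.finrank_range_of_inj (LinearMap.injective_domRestrict_iff.mpr h)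

section Filtration

def tailSup (G : ℕ → Submodule K V) (k : ℕ) : Submodule K V := ⨆ l, ⨆ (_ : k ≤ l), G l

variable {G : ℕ → Submodule K V}

lemma le_tailSup {k l : ℕ} (h : k ≤ l) : G l ≤ tailSup G k :=
  le_iSup₂_of_le l h le_rfl

lemma tailSup_antitone : Antitone (tailSup G) :=
  fun _ _ h => iSup₂_le fun _ hl => le_tailSup (h.trans hl)

lemma tailSup_eq_sup (k : ℕ) : tailSup G k = G k ⊔ tailSup G (k + 1) := by
  refine le_antisymm (iSup₂_le fun l hl => ?_)
    (sup_le (le_tailSup le_rfl) (tailSup_antitone k.le_succ))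
  rcases hl.eq_or_lt with rfl | hlt
  · exact le_sup_left
  · exact le_sup_of_le_right (le_tailSup hlt)

lemma tailSup_zero (hG : ⨆ k, G k = ⊤) : tailSup G 0 = ⊤ :=
  eq_top_iff.mpr (hG ▸ iSup_le fun l => le_tailSup l.zero_le)

lemma tailSup_eq_bot {N k : ℕ} (hGN : ∀ k, N < k → G k = ⊥) (hk : N < k) : tailSup G k = ⊥ :=
  eq_bot_iff.mpr (iSup₂_le fun l hl => (hGN l (hk.trans_le hl)).le)

lemma disjoint_tailSup_succ (hG : iSupIndep G) (k : ℕ) : Disjoint (G k) (tailSup G (k + 1)) :=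
  hG.disjoint_biSup (y := Set.Ici (k + 1)) (by simp)

lemma map_tailSup_le {f : V →ₗ[K] V} {d : ℕ} (hf : ∀ k, (G k).map f ≤ tailSup G (k + d))
    (k : ℕ) : (tailSup G k).map f ≤ tailSup G (k + d) := by
  simp only [tailSup, Submodule.map_iSup]
  exact iSup₂_le fun l hl => (hf l).trans (tailSup_antitone (by omega))

lemma map_pow_tailSup_le {f : Module.End K V} (hf : ∀ k, (tailSup G k).map f ≤ tailSup G (k + 1))
    (t k : ℕ) : (tailSup G k).map (f ^ t) ≤ tailSup G (k + t) := by
  induction t with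
  | zero => simp [Module.End.one_eq_id]
  | succ t ih =>
    rw [pow_succ', Module.End.mul_eq_comp, Submodule.map_comp, ← add_assoc]
    exact (Submodule.map_mono ih).trans (hf (k + t))

lemma map_pow_le {X : Module.End K V} (hX : ∀ k, (G k).map X ≤ G (k + 1)) (t k : ℕ) :
    (G k).map (X ^ t) ≤ G (k + t) := by
  induction t with
  | zero => simp [Module.End.one_eq_id]
  | succ t ih =>
    rw [pow_succ', Module.End.mul_eq_comp, Submodule.map_comp, ← add_assoc]
    exact (Submodule.map_mono ih).trans (hX (k + t))

lemma map_tailSup_le_of_leading {X ψ : Module.End K V} {c : K}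
    (hX : ∀ k, (G k).map X ≤ G (k + 1))
    (hlead : ∀ k, ∀ v ∈ G k, ψ v - c • X v ∈ tailSup G (k + 2)) (k : ℕ) :
    (tailSup G k).map ψ ≤ tailSup G (k + 1) := by
  refine map_tailSup_le (fun j => ?_) k
  rintro _ ⟨v, hv, rfl⟩
  have hXv : c • X v ∈ tailSup G (j + 1) :=
    (tailSup G _).smul_mem c (le_tailSup le_rfl (hX j ⟨v, hv, rfl⟩))
  simpa using add_mem (tailSup_antitone (j + 1).le_succ (hlead j v hv)) hXv

lemma pow_apply_sub_smul_mem_tailSup {X ψ : Module.End K V} {c : K}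
    (hX : ∀ k, (G k).map X ≤ G (k + 1))
    (hlead : ∀ k, ∀ v ∈ G k, ψ v - c • X v ∈ tailSup G (k + 2)) (t : ℕ) {k : ℕ} {v : V}
    (hv : v ∈ G k) : (ψ ^ t) v - c ^ t • (X ^ t) v ∈ tailSup G (k + t + 1) := by
  induction t with
  | zero => simp
  | succ t ih =>
    have hXt : (X ^ t) v ∈ G (k + t) := map_pow_le hX t k ⟨v, hv, rfl⟩
    have hsplit : (ψ ^ (t + 1)) v - c ^ (t + 1) • (X ^ (t + 1)) v
        = ψ ((ψ ^ t) v - c ^ t • (X ^ t) v) + c ^ t • (ψ ((X ^ t) v) - c • X ((X ^ t) v)) := by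
      simp only [pow_succ', Module.End.mul_apply, map_sub, map_smul, smul_sub, smul_smul]
      module
    rw [hsplit, ← add_assoc k]
    exact add_mem (map_tailSup_le_of_leading hX hlead _ ⟨_, ih, rfl⟩)
      ((tailSup G _).smul_mem _ (hlead _ _ hXt))

variable [FiniteDimensional K V]

lemma finrank_map_tailSup_zero_le_sum_add (f : V →ₗ[K] V) (n : ℕ) :
    finrank K ((tailSup G 0).map f)
      ≤ ∑ k ∈ Finset.range n, finrank K ((G k).map f) + finrank K ((tailSup G n).map f) := by
  induction n with
  | zero => simp
  | succ n ih =>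
    have hstep := Submodule.finrank_add_le_finrank_add_finrank ((G n).map f)
      ((tailSup G (n + 1)).map f)
    rw [← Submodule.map_sup, ← tailSup_eq_sup] at hstep
    rw [Finset.sum_range_succ]
    omega

lemma finrank_map_add_finrank_map_tailSup_le (hG : iSupIndep G) {f g : V →ₗ[K] V} {d : ℕ}
    (hf : ∀ k, (tailSup G k).map f ≤ tailSup G (k + d)) (hg : ∀ k, (G k).map g ≤ G (k + d))
    (hfg : ∀ k, ∀ v ∈ G k, f v - g v ∈ tailSup G (k + d + 1)) (k : ℕ) :
    finrank K ((G k).map g) + finrank K ((tailSup G (k + 1)).map f)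
      ≤ finrank K ((tailSup G k).map f) := by
  set W := (tailSup G k).map f
  set E := tailSup G (k + d + 1)
  have hW' : (tailSup G (k + 1)).map f ≤ W ⊓ E :=
    le_inf (Submodule.map_mono (tailSup_antitone k.le_succ))
      ((hf _).trans_eq (by rw [add_right_comm]))
  have hgW : (G k).map g ≤ W ⊔ E := by
    rintro _ ⟨v, hv, rfl⟩
    have hfv : f v ∈ W := ⟨v, le_tailSup le_rfl hv, rfl⟩
    simpa using Submodule.sub_mem_sup hfv (hfg k v hv)
  have hdisj : Disjoint ((G k).map g) E := (disjoint_tailSup_succ hG (k + d)).mono_left (hg k)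
  have h1 := Submodule.finrank_sup_add_finrank_inf_eq ((G k).map g) E
  have h2 := Submodule.finrank_sup_add_finrank_inf_eq W E
  rw [hdisj.eq_bot, finrank_bot, add_zero] at h1
  have h3 := Submodule.finrank_mono (sup_le hgW le_sup_right)
  have h4 := Submodule.finrank_mono hW'
  omega

lemma sum_finrank_map_add_finrank_map_tailSup_le (hG : iSupIndep G) {f g : V →ₗ[K] V} {d : ℕ}
    (hf : ∀ k, (tailSup G k).map f ≤ tailSup G (k + d)) (hg : ∀ k, (G k).map g ≤ G (k + d))
    (hfg : ∀ k, ∀ v ∈ G k, f v - g v ∈ tailSup G (k + d + 1)) (n : ℕ) :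
    ∑ k ∈ Finset.range n, finrank K ((G k).map g) + finrank K ((tailSup G n).map f)
      ≤ finrank K ((tailSup G 0).map f) := by
  induction n with
  | zero => simp
  | succ n ih =>
    have := finrank_map_add_finrank_map_tailSup_le hG hf hg hfg n
    rw [Finset.sum_range_succ]
    omega

lemma finrank_range_le_sum_add (hG : ⨆ k, G k = ⊤) {f : V →ₗ[K] V} {n d : ℕ}
    (hf : (tailSup G n).map f ≤ tailSup G (n + d)) :
    finrank K (LinearMap.range f)
      ≤ ∑ k ∈ Finset.range n, finrank K (G k) + finrank K (tailSup G (n + d)) := by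
  rw [LinearMap.range_eq_map, ← tailSup_zero hG]
  refine (finrank_map_tailSup_zero_le_sum_add f n).trans (add_le_add ?_ (Submodule.finrank_mono hf))
  exact Finset.sum_le_sum fun k _ => Submodule.finrank_map_le _ _

lemma sum_add_finrank_le_finrank_range_pow (hG : DirectSum.IsInternal G) {X : Module.End K V}
    (hX : ∀ k, (G k).map X ≤ G (k + 1)) {n s : ℕ}
    (hinj : ∀ k < n, Disjoint (G k) (LinearMap.ker (X ^ s)))
    (hsurj : tailSup G (n + s) ≤ (tailSup G n).map (X ^ s)) :
    ∑ k ∈ Finset.range n, finrank K (G k) + finrank K (tailSup G (n + s))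
      ≤ finrank K (LinearMap.range (X ^ s)) := by
  rw [LinearMap.range_eq_map, ← tailSup_zero hG.submodule_iSup_eq_top,
    Finset.sum_congr rfl fun k hk =>
      (finrank_map_eq_of_disjoint_ker (hinj k (Finset.mem_range.mp hk))).symm]
  refine (add_le_add_right (Submodule.finrank_mono hsurj) _).trans ?_
  exact sum_finrank_map_add_finrank_map_tailSup_le hG.submodule_iSupIndep
    (map_tailSup_le fun k => (map_pow_le hX s k).trans (le_tailSup le_rfl)) (map_pow_le hX s)
    (by simp) n

lemma finrank_range_pow_le_of_leading {N : ℕ} (hG : DirectSum.IsInternal G)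
    (hGN : ∀ k, N < k → G k = ⊥) {X ψ : Module.End K V} {c : K} (hc : c ≠ 0)
    (hX : ∀ k, (G k).map X ≤ G (k + 1))
    (hlead : ∀ k, ∀ v ∈ G k, ψ v - c • X v ∈ tailSup G (k + 2)) (s : ℕ) :
    finrank K (LinearMap.range (X ^ s)) ≤ finrank K (LinearMap.range (ψ ^ s)) := by
  have hcs : c ^ s ≠ 0 := pow_ne_zero s hc
  have hbot : tailSup G (N + 1) = ⊥ := tailSup_eq_bot hGN N.lt_succ_self
  rw [LinearMap.range_eq_map, LinearMap.range_eq_map, ← tailSup_zero hG.submodule_iSup_eq_top]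
  calc finrank K ((tailSup G 0).map (X ^ s))
      ≤ ∑ k ∈ Finset.range (N + 1), finrank K ((G k).map (X ^ s))
          + finrank K ((tailSup G (N + 1)).map (X ^ s)) := finrank_map_tailSup_zero_le_sum_add _ _
    _ = ∑ k ∈ Finset.range (N + 1), finrank K ((G k).map (c ^ s • X ^ s))
          + finrank K ((tailSup G (N + 1)).map (ψ ^ s)) := by
      rw [hbot, Submodule.map_bot, Submodule.map_bot]
      congr! 2 with k
      rw [Submodule.map_smul _ _ _ hcs]
    _ ≤ finrank K ((tailSup G 0).map (ψ ^ s)) :=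
      sum_finrank_map_add_finrank_map_tailSup_le hG.submodule_iSupIndep
        (map_pow_tailSup_le (map_tailSup_le_of_leading hX hlead) s)
        (fun k => by rw [Submodule.map_smul _ _ _ hcs]; exact map_pow_le hX s k)
        (fun k v hv => pow_apply_sub_smul_mem_tailSup hX hlead s hv) _

end Filtration

structure IsGradedSl2Triple (G : ℕ → Submodule K V) (N : ℕ) (X Y H : Module.End K V) : Prop where
  iSup_eq_top : ⨆ k, G k = ⊤
  map_le : ∀ k, (G k).map X ≤ G (k + 1)
  lie_H_X : H * X - X * H = (2 : K) • X
  lie_H_Y : H * Y - Y * H = (-2 : K) • Y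
  lie_X_Y : X * Y - Y * X = H
  apply_H : ∀ k, ∀ v ∈ G k, H v = (((2 * k : ℤ) - (N : ℤ)) : K) • v

namespace IsGradedSl2Triple

variable [CharZero K] {G : ℕ → Submodule K V} {N : ℕ} {X Y H : Module.End K V}

lemma lower_apply_mem_iSup (hT : IsGradedSl2Triple G N X Y H) {k : ℕ} {v : V} (hv : v ∈ G k) :
    Y v ∈ ⨆ (l) (_ : l + 1 = k), G l := by
  have hweight : ∀ l : ℕ, (((2 * l : ℤ) - (N : ℤ)) : K) = (((2 * k : ℤ) - (N : ℤ)) : K) - 2 ↔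
      l + 1 = k := fun l => by
    exact_mod_cast show 2 * (l : ℤ) - N = 2 * k - N - 2 ↔ l + 1 = k by omega
  have hHYv : H (Y v) = ((((2 * k : ℤ) - (N : ℤ)) : K) - 2) • Y v := by
    have h := LinearMap.congr_fun hT.lie_H_Y v
    simp only [LinearMap.sub_apply, Module.End.mul_apply, LinearMap.smul_apply,
      hT.apply_H k v hv, map_smul] at h
    rw [sub_eq_iff_eq_add.mp h]
    module
  have := Module.End.eigenspace_le_iSup hT.iSup_eq_top
    (fun l u hu => Module.End.mem_eigenspace_iff.mpr (hT.apply_H l u hu)) _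
    (Module.End.mem_eigenspace_iff.mpr hHYv)
  simpa only [hweight] using this

lemma lower_apply_eq_zero (hT : IsGradedSl2Triple G N X Y H) {v : V} (hv : v ∈ G 0) : Y v = 0 := by
  simpa using hT.lower_apply_mem_iSup hv

lemma lower_apply_mem (hT : IsGradedSl2Triple G N X Y H) {k : ℕ} {v : V} (hv : v ∈ G (k + 1)) :
    Y v ∈ G k := by
  simpa using hT.lower_apply_mem_iSup hv

lemma raise_lower_apply_mem (hT : IsGradedSl2Triple G N X Y H) {k : ℕ} {v : V} (hv : v ∈ G k) :
    X (Y v) ∈ G k := by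
  cases k with
  | zero => simp [hT.lower_apply_eq_zero hv]
  | succ k => exact hT.map_le k ⟨_, hT.lower_apply_mem hv, rfl⟩

lemma eq_zero_of_raise_lower_apply_eq (hT : IsGradedSl2Triple G N X Y H) {k : ℕ} (hk : 2 * k ≤ N)
    {v : V} (hv : v ∈ G k) {μ : ℤ} (hμ : μ < 0) (h : X (Y v) = (μ : K) • v) : v = 0 := by
  have key : ∀ {v : V} {μ : ℤ}, μ < 0 → X (Y v) = (μ : K) • v → Y v = 0 → v = 0 := by
    intro v μ hμ h hY
    rw [hY, map_zero, eq_comm, smul_eq_zero] at h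
    exact h.resolve_left (by exact_mod_cast hμ.ne)
  -- `Y v ∈ G (k - 1)` satisfies the same relation with `μ + 2 (k - 1) - N < 0`; `Y` kills `G 0`.
  induction k generalizing v μ with
  | zero => exact key hμ h (hT.lower_apply_eq_zero hv)
  | succ k ih =>
    have hYv := hT.lower_apply_mem hv
    have hXY := LinearMap.congr_fun hT.lie_X_Y (Y v)
    simp only [LinearMap.sub_apply, Module.End.mul_apply, h, map_smul,
      hT.apply_H k _ hYv] at hXY
    refine key hμ h (ih (by omega) hYv (μ := μ + (2 * k - N)) (by omega) ?_)
    rw [sub_eq_iff_eq_add.mp hXY]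
    push_cast
    module

lemma disjoint_ker_pow (hT : IsGradedSl2Triple G N X Y H) {t k : ℕ} (h : 2 * k + t ≤ N) :
    Disjoint (G k) (LinearMap.ker (X ^ t)) := by
  rw [Submodule.disjoint_def]
  induction t with
  | zero => intro v _ hv; simpa using hv
  | succ t ih =>
    intro v hv hXv
    -- Applying `Y` to `X^(t+1) v = 0` gives `X^t (X Y v - μ v) = 0`, so `X Y v = μ v` by induction.
    have hHX : H * X - X * H = 2 * X := by rw [hT.lie_H_X, two_smul, two_mul]
    have h0 := congrArg Y (LinearMap.mem_ker.mp hXv)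
    rw [map_zero, ← Module.End.mul_apply, lower_mul_raise_pow_succ hHX hT.lie_X_Y t] at h0
    simp only [LinearMap.sub_apply, Module.End.mul_apply, LinearMap.smul_apply,
      LinearMap.add_apply, hT.apply_H k v hv, map_smul] at h0
    set μ : ℤ := (t + 1) * (2 * k - N + t)
    have hu : X (Y v) - (μ : K) • v ∈ G k :=
      sub_mem (hT.raise_lower_apply_mem hv) ((G k).smul_mem _ hv)
    have hXu : (X ^ t) (X (Y v) - (μ : K) • v) = 0 := by
      rw [← h0, map_sub, map_smul, ← Module.End.mul_apply, ← pow_succ]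
      push_cast [μ]
      module
    have hXYv : X (Y v) = (μ : K) • v := sub_eq_zero.mp (ih (by omega) _ hu hXu)
    exact hT.eq_zero_of_raise_lower_apply_eq (by omega) hv
      (mul_neg_of_pos_of_neg (by omega) (by omega)) hXYv

variable [FiniteDimensional K V]

lemma map_pow_eq (hT : IsGradedSl2Triple G N X Y H)
    (hsym : ∀ k ≤ N, finrank K (G k) = finrank K (G (N - k))) {k : ℕ} (hk : 2 * k ≤ N) :
    (G k).map (X ^ (N - 2 * k)) = G (N - k) := by
  refine Submodule.eq_of_le_of_finrank_eq
    ((map_pow_le hT.map_le _ k).trans_eq (by congr 1; omega)) ?_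
  rw [finrank_map_eq_of_disjoint_ker (hT.disjoint_ker_pow (by omega)), hsym k (by omega)]

lemma le_map_pow (hT : IsGradedSl2Triple G N X Y H)
    (hsym : ∀ k ≤ N, finrank K (G k) = finrank K (G (N - k))) (hGN : ∀ k, N < k → G k = ⊥)
    {k s : ℕ} (h : N ≤ 2 * k + s) : G (k + s) ≤ (G k).map (X ^ s) := by
  rcases lt_or_ge N (k + s) with hlt | hle
  · rw [hGN _ hlt]
    exact bot_le
  obtain ⟨j, hj⟩ : ∃ j, j + k + s = N := ⟨N - (k + s), by omega⟩
  calc G (k + s) = G (N - j) := by congr 1; omega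
    _ = (G j).map (X ^ (N - 2 * j)) := (hT.map_pow_eq hsym (by omega)).symm
    _ = ((G j).map (X ^ (2 * k + s - N))).map (X ^ s) := by
        rw [← Submodule.map_comp, ← Module.End.mul_eq_comp, ← pow_add]
        congr 2
        omega
    _ ≤ (G k).map (X ^ s) :=
        Submodule.map_mono ((map_pow_le hT.map_le _ j).trans_eq (by congr 1; omega))

lemma tailSup_le_map_pow (hT : IsGradedSl2Triple G N X Y H)
    (hsym : ∀ k ≤ N, finrank K (G k) = finrank K (G (N - k))) (hGN : ∀ k, N < k → G k = ⊥)
    {n s : ℕ} (h : N ≤ 2 * n + s) : tailSup G (n + s) ≤ (tailSup G n).map (X ^ s) :=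
  iSup₂_le fun l hl => by
    obtain ⟨k, rfl⟩ : ∃ k, l = k + s := ⟨l - s, by omega⟩
    exact (hT.le_map_pow hsym hGN (by omega)).trans (Submodule.map_mono (le_tailSup (by omega)))

end IsGradedSl2Triple

end

theorem jordan_type_of_perturbation_general {V : Type*} [AddCommGroup V] [Module ℂ V]
    [FiniteDimensional ℂ V]
    (N : ℕ) (G : ℕ → Submodule ℂ V) (hG : DirectSum.IsInternal G)
    (hGN : ∀ k, N < k → G k = ⊥)
    (hsym : ∀ k ≤ N, Module.finrank ℂ (G k) = Module.finrank ℂ (G (N - k)))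
    (X Y H : Module.End ℂ V)
    (hXgr : ∀ k, (G k).map X ≤ G (k + 1))
    (hHX : H * X - X * H = (2 : ℂ) • X)
    (hHY : H * Y - Y * H = (-2 : ℂ) • Y)
    (hXY : X * Y - Y * X = H)
    (hH : ∀ k, ∀ v ∈ G k, H v = (((2 * k : ℤ) - (N : ℤ)) : ℂ) • v)
    (ψ : Module.End ℂ V) (c : ℂ) (hc : c ≠ 0)
    (hlead : ∀ k, ∀ v ∈ G k, ψ v - c • X v ∈ ⨆ l, ⨆ (_ : k + 2 ≤ l), G l) :
    ∀ s : ℕ, Module.finrank ℂ (LinearMap.range (ψ ^ s))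
      = Module.finrank ℂ (LinearMap.range (X ^ s)) := by
  intro s
  have hT : IsGradedSl2Triple G N X Y H := ⟨hG.submodule_iSup_eq_top, hXgr, hHX, hHY, hXY, hH⟩
  obtain ⟨n, hn, hnk⟩ : ∃ n, N ≤ 2 * n + s ∧ ∀ k < n, 2 * k + s ≤ N :=
    ⟨(N + 2 - s) / 2, by omega, fun k hk => by omega⟩
  have hψ := map_pow_tailSup_le (map_tailSup_le_of_leading hXgr hlead) s n
  refine le_antisymm ?_ (finrank_range_pow_le_of_leading hG hGN hc hXgr hlead s)
  calc Module.finrank ℂ (LinearMap.range (ψ ^ s))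
      ≤ ∑ k ∈ Finset.range n, Module.finrank ℂ (G k) + Module.finrank ℂ (tailSup G (n + s)) :=
        finrank_range_le_sum_add hG.submodule_iSup_eq_top hψ
    _ ≤ Module.finrank ℂ (LinearMap.range (X ^ s)) :=
        sum_add_finrank_le_finrank_range_pow hG hXgr (fun k hk => hT.disjoint_ker_pow (hnk k hk))
          (hT.tailSup_le_map_pow hsym hGN hn)

/-- let `V = ⊕_{k=0}^N G_k` be graded with symmetric unimodal
dimension sequence, let `(X, Y, H)` be an `𝔰𝔩₂`-triple with `X(G_k) ⊆ G_{k+1}`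
and `H` acting on `G_k` by `2k − N`, and let `ψ` be a linear map with
`ψ(F_k) ⊆ F_{k+1}` (where `F_k = ⊕_{ℓ≥k} G_ℓ`) whose leading superdiagonal part
is `c·X` with `c ≠ 0`.  Then the Jordan block sizes (with multiplicities) of `ψ`
coincide with those of `X`; equivalently, `rank ψ^s = rank X^s` for all `s`. -/
theorem jordan_type_of_perturbation {V : Type*} [AddCommGroup V] [Module ℂ V]
    [FiniteDimensional ℂ V]
    (N : ℕ) (G : ℕ → Submodule ℂ V) (hG : DirectSum.IsInternal G)
    (hGN : ∀ k, N < k → G k = ⊥)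
    (hsym : ∀ k ≤ N, Module.finrank ℂ (G k) = Module.finrank ℂ (G (N - k)))
    (huni : ∃ k0 ≤ N,
      (∀ k l, k ≤ l → l ≤ k0 → Module.finrank ℂ (G k) ≤ Module.finrank ℂ (G l))
      ∧ (∀ k l, k0 ≤ k → k ≤ l → Module.finrank ℂ (G l) ≤ Module.finrank ℂ (G k)))
    (X Y H : Module.End ℂ V)
    (hXgr : ∀ k, (G k).map X ≤ G (k + 1))
    (hHX : H * X - X * H = (2 : ℂ) • X)
    (hHY : H * Y - Y * H = (-2 : ℂ) • Y)
    (hXY : X * Y - Y * X = H)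
    (hH : ∀ k, ∀ v ∈ G k, H v = (((2 * k : ℤ) - (N : ℤ)) : ℂ) • v)
    (ψ : Module.End ℂ V) (c : ℂ) (hc : c ≠ 0)
    (hψF : ∀ k, ∀ v ∈ G k, ψ v ∈ ⨆ l, ⨆ (_ : k + 1 ≤ l), G l)
    (hlead : ∀ k, ∀ v ∈ G k, ψ v - c • X v ∈ ⨆ l, ⨆ (_ : k + 2 ≤ l), G l) :
    ∀ s : ℕ, Module.finrank ℂ (LinearMap.range (ψ ^ s))
      = Module.finrank ℂ (LinearMap.range (X ^ s)) :=
  jordan_type_of_perturbation_general N G hG hGN hsym X Y H hXgr hHX hHY hXY hH ψ c hc hlead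
end

section
/- Let n ≥ 1 and a_1,...,a_n ∈ ℂ^* be pairwise distinct, with a_i/a_j ∉ {q^2, q^{−2}} for i ≠ j not assumed. On the 2^n-dimensional space with basis (V_A)_{A ⊆ {1,...,n}}, define φ^±(u) V_A = V_A ∏_{j∈A}(q^{−1} − q a_j u)/(1 − a_j u) · ∏_{j∉A}(q − q^{−1} a_j u)/(1 − a_j u), x^+(u) V_A = Σ_{j∈A} δ(a_j/u) V_{A∖{j}} ∏_{k∉A}(a_j q − a_k q^{−1})/(a_j − a_k), x^−(u) V_A = Σ_{j∉A} δ(a_j/u) V_{A∪{j}} ∏_{k∈A}(a_k q − a_j q^{−1})/(a_k − a_j). These formulas define a representation of the quantum loop algebra U_q(Lsl_2). -/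
/-!
Write `x^±(u) = Σⱼ δ(aⱼ/u) E^±ⱼ`, where `E⁺ⱼ` (`E⁻ⱼ`) removes `j` from (adds `j` to) the index
set `A`. Since `φ^±(u)` is diagonal and its eigenvalue on `V_A` is
`∏ₖ (cₖ - dₖ aₖ u) / (1 - aₖ u)` with `(cₖ, dₖ) = (q⁻¹, q)` for `k ∈ A` and `(q, q⁻¹)` otherwise,
moving `j` in or out of `A` changes only the `j`-th factor: these are the `φ`–`x` relations.
With `w(x, y) = (x q - y q⁻¹) / (x - y)`, the products `E⁺ᵢ E⁺ⱼ` and `E⁻ᵢ E⁻ⱼ` are `w(aᵢ, aⱼ)`,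
resp. `w(aⱼ, aᵢ)`, times a matrix symmetric in `i, j`, and the `x`–`x` relations reduce to the
identity `w(x, y) (x - q² y) + w(y, x) (y - q² x) = 0`. Finally `E⁺ᵢ` and `E⁻ⱼ` commute for
`i ≠ j`, and `(q - q⁻¹) [E⁺ⱼ, E⁻ⱼ]` is diagonal with entry on `V_A` the residue of the
eigenvalue at its pole `u = aⱼ⁻¹`. Expanding the eigenvalue in partial fractions at `u = 0`
(for `φ⁺`) and at `u = ∞` (for `φ⁻`) gives `φ⁺ₘ - φ⁻ₘ = Σⱼ Resⱼ aⱼ^m` for every `m ∈ ℤ`, which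
is the relation for `[x⁺, x⁻]`.
-/

open Finset Matrix PowerSeries

namespace ThinStandardModule

variable (n : ℕ) (q : ℂ) (a : Fin n → ℂ)

/-- `x⁺_t V_A = Σ_{j∈A} a_j^t V_{A∖{j}} ∏_{k∉A}(a_j q − a_k q⁻¹)/(a_j − a_k)`,
as a matrix in the basis `(V_A)_{A ⊆ {1,…,n}}`. -/
noncomputable def Xp (t : ℤ) : Matrix (Finset (Fin n)) (Finset (Fin n)) ℂ :=
  fun B A => ∑ j ∈ A, if B = A.erase j then
      a j ^ t * ∏ k ∈ Aᶜ, (a j * q - a k * q⁻¹) / (a j - a k)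
    else 0

/-- `x⁻_t V_A = Σ_{j∉A} a_j^t V_{A∪{j}} ∏_{k∈A}(a_k q − a_j q⁻¹)/(a_k − a_j)`. -/
noncomputable def Xm (t : ℤ) : Matrix (Finset (Fin n)) (Finset (Fin n)) ℂ :=
  fun B A => ∑ j ∈ Aᶜ, if B = insert j A then
      a j ^ t * ∏ k ∈ A, (a k * q - a j * q⁻¹) / (a k - a j)
    else 0

/-- The power series (in `u`) `∏_{j∈A}(q⁻¹ − q a_j u) ∏_{j∉A}(q − q⁻¹ a_j u) / ∏_j (1 − a_j u)`,
the eigenvalue of `φ⁺(u)` on `V_A`. -/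
noncomputable def gp (A : Finset (Fin n)) : PowerSeries ℂ :=
  (∏ j ∈ A, (PowerSeries.C q⁻¹ - PowerSeries.C (q * a j) * PowerSeries.X))
  * (∏ j ∈ Aᶜ, (PowerSeries.C q - PowerSeries.C (q⁻¹ * a j) * PowerSeries.X))
  * (∏ j : Fin n, (1 - PowerSeries.C (a j) * PowerSeries.X))⁻¹

/-- The power series (in `w = u⁻¹`)
`∏_{j∈A}(q − q⁻¹ a_j⁻¹ w) ∏_{j∉A}(q⁻¹ − q a_j⁻¹ w) / ∏_j (1 − a_j⁻¹ w)`,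
the eigenvalue of `φ⁻(u)` on `V_A` expanded at `u = ∞`. -/
noncomputable def gm (A : Finset (Fin n)) : PowerSeries ℂ :=
  (∏ j ∈ A, (PowerSeries.C q - PowerSeries.C (q⁻¹ * (a j)⁻¹) * PowerSeries.X))
  * (∏ j ∈ Aᶜ, (PowerSeries.C q⁻¹ - PowerSeries.C (q * (a j)⁻¹) * PowerSeries.X))
  * (∏ j : Fin n, (1 - PowerSeries.C ((a j)⁻¹) * PowerSeries.X))⁻¹

/-- `φ⁺_m`: the coefficient of `u^m` (`m ≥ 0`) in the diagonal action of `φ⁺(u)`. -/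
noncomputable def Php (m : ℤ) : Matrix (Finset (Fin n)) (Finset (Fin n)) ℂ :=
  fun B A => if B = A ∧ 0 ≤ m then PowerSeries.coeff m.toNat (gp n q a A) else 0

/-- `φ⁻_m`: the coefficient of `u^m` (`m ≤ 0`) in the diagonal action of `φ⁻(u)`. -/
noncomputable def Phm (m : ℤ) : Matrix (Finset (Fin n)) (Finset (Fin n)) ℂ :=
  fun B A => if B = A ∧ m ≤ 0 then PowerSeries.coeff (-m).toNat (gm n q a A) else 0

end ThinStandardModule

namespace Polynomial

variable {R ι : Type*} [CommRing R]

theorem natDegree_prod_C_sub_C_mul_X_le (s : Finset ι) (u v : ι → R) :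
    (∏ j ∈ s, (C (u j) - C (v j) * X)).natDegree ≤ #s :=
  (natDegree_prod_le _ _).trans <| (sum_le_sum fun j _ => by compute_degree).trans_eq (by simp)

theorem coeff_prod_C_sub_C_mul_X_card (s : Finset ι) (u v : ι → R) :
    (∏ j ∈ s, (C (u j) - C (v j) * X)).coeff #s = ∏ j ∈ s, -v j := by
  have h := coeff_prod_of_natDegree_le (s := s) (fun j => C (u j) - C (v j) * X) 1
    fun j _ => by compute_degree
  rw [mul_one] at h
  rw [h]
  exact prod_congr rfl fun j _ => by simp [coeff_C]

theorem prod_C_sub_C_mul_X_eq_partialFractions {K : Type*} [Field K] [Fintype ι] [DecidableEq ι]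
    (c d : ι → K) {a : ι → K} (ha : a.Injective) (ha0 : ∀ i, a i ≠ 0) :
    ∏ j, (C (c j) - C (d j * a j) * X) =
      C (∏ j, d j) * ∏ j, (1 - C (a j) * X) +
        ∑ i, C ((c i - d i) * ∏ k ∈ univ.erase i, (c k * a i - d k * a k) / (a i - a k)) *
          ∏ k ∈ univ.erase i, (1 - C (a k) * X) := by
  classical
  simp_rw [← map_one (C : K →+* K[X])]
  have hcard : #(univ.image fun i => (a i)⁻¹) = Fintype.card ι :=
    card_image_of_injective _ (inv_injective.comp ha)
  -- Both sides have degree at most `card ι` with the same leading coefficient, and they agree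
  -- at the `card ι` distinct points `(a i)⁻¹`.
  refine eq_of_degree_sub_lt_of_eval_finset_eq (univ.image fun i => (a i)⁻¹) ?_ ?_
  · rw [hcard, degree_lt_iff_coeff_zero]
    intro m hm
    have hD : ∀ i, (∏ k ∈ univ.erase i, (C 1 - C (a k) * X)).coeff m = 0 := fun i =>
      coeff_eq_zero_of_natDegree_lt <| (natDegree_prod_C_sub_C_mul_X_le _ _ _).trans_lt <| by
        rw [card_erase_of_mem (mem_univ i), card_univ]
        have := Fintype.card_pos_iff.mpr ⟨i⟩
        omega
    simp only [coeff_sub, coeff_add, coeff_C_mul, finsetSum_coeff, hD, mul_zero, sum_const_zero,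
      add_zero]
    rcases hm.lt_or_eq with hm | rfl
    · rw [coeff_eq_zero_of_natDegree_lt, coeff_eq_zero_of_natDegree_lt, mul_zero, sub_zero] <;>
      exact (natDegree_prod_C_sub_C_mul_X_le _ _ _).trans_lt (by simpa using hm)
    · rw [← card_univ, coeff_prod_C_sub_C_mul_X_card, coeff_prod_C_sub_C_mul_X_card,
        ← prod_mul_distrib]
      simp
  · simp only [mem_image, mem_univ, true_and, forall_exists_index, forall_apply_eq_imp_iff]
    intro i
    have hzero : eval (a i)⁻¹ (C 1 - C (a i) * X) = 0 := by simp [ha0 i]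
    simp only [eval_add, eval_mul, eval_C, eval_prod, eval_finsetSum]
    rw [prod_eq_zero (f := fun k => eval (a i)⁻¹ (C 1 - C (a k) * X)) (mem_univ i) hzero,
      mul_zero, zero_add,
      sum_eq_single i (fun k _ hki => by
        rw [prod_eq_zero (f := fun k => eval (a i)⁻¹ (C 1 - C (a k) * X))
          (mem_erase.mpr ⟨Ne.symm hki, mem_univ i⟩) hzero, mul_zero]) (by simp),
      ← mul_prod_erase univ _ (mem_univ i), mul_assoc, ← prod_mul_distrib]
    congr 1
    · simp [ha0 i]
    · refine prod_congr rfl fun k hk => ?_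
      have hik : a i - a k ≠ 0 := sub_ne_zero.mpr (ha.ne (ne_of_mem_erase hk).symm)
      simp only [eval_sub, eval_C, eval_mul, eval_X]
      field_simp [ha0 i]

end Polynomial

namespace PowerSeries

variable {K : Type*} [Field K]

theorem coeff_inv_one_sub_C_mul_X (x : K) (m : ℕ) : coeff m (1 - C x * X)⁻¹ = x ^ m := by
  have h : (1 - C x * X)⁻¹ = rescale x (mk 1) := by
    rw [PowerSeries.inv_eq_iff_mul_eq_one (by simp), ← rescale_X, ← map_one (rescale x),
      ← map_sub, ← map_mul, mk_one_mul_one_sub_eq_one, map_one]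
  rw [h, coeff_rescale, coeff_mk, Pi.one_apply, mul_one]

end PowerSeries

namespace Finset

theorem sum_sum_eq_zero_of_antisymm {ι M : Type*} [AddCommMonoid M] (s : Finset ι)
    (f : ι → ι → M) (hdiag : ∀ i ∈ s, f i i = 0)
    (hanti : ∀ i ∈ s, ∀ j ∈ s, i ≠ j → f i j + f j i = 0) :
    ∑ i ∈ s, ∑ j ∈ s, f i j = 0 := by
  rw [← sum_product' s s f]
  refine sum_involution (fun p _ => p.swap) (fun p hp => ?_) (fun p hp hne h => hne ?_)
    (fun p hp => mem_product.mpr (mem_product.mp hp).symm) (fun p _ => p.swap_swap)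
  · obtain ⟨hi, hj⟩ := mem_product.mp hp
    by_cases h : p.1 = p.2
    · rw [Prod.fst_swap, Prod.snd_swap, ← h, hdiag _ hi, add_zero]
    · exact hanti _ hi _ hj h
  · rw [show p.1 = p.2 from (congrArg Prod.fst h).symm]
    exact hdiag _ (mem_product.mp hp).2

end Finset

namespace Matrix

variable {K κ : Type*} [Field K] [Fintype κ]

theorem mul_apply_of_forall_ne_eq_zero {α : Type*} [NonUnitalNonAssocSemiring α]
    {M N : Matrix κ κ α} {B A C : κ} (hN : ∀ C', C' ≠ C → N C' A = 0) :
    (M * N) B A = M B C * N C A := by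
  rw [mul_apply, sum_eq_single C (fun C' _ hC' => by rw [hN C' hC', mul_zero]) (by simp)]

theorem diagonal_mul_sum_zpow_smul_relation [DecidableEq κ] {ι : Type*} [Fintype ι]
    {E : ι → Matrix κ κ K} {x : ι → K} (hx : ∀ j, x j ≠ 0) {d d' : κ → K} {α β γ δ : K}
    (h : ∀ j B A, E j B A ≠ 0 → α * d B - β * x j * d' B = γ * d A - δ * x j * d' A) (t : ℤ) :
    α • (diagonal d * ∑ j, x j ^ t • E j) - β • (diagonal d' * ∑ j, x j ^ (t + 1) • E j) =
      γ • ((∑ j, x j ^ t • E j) * diagonal d) - δ • ((∑ j, x j ^ (t + 1) • E j) * diagonal d') := by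
  ext B A
  simp only [sub_apply, smul_apply, diagonal_mul, mul_diagonal, sum_apply, smul_eq_mul,
    Finset.mul_sum, Finset.sum_mul, ← Finset.sum_sub_distrib]
  refine Finset.sum_congr rfl fun j _ => ?_
  rw [zpow_add_one₀ (hx j)]
  by_cases hE : E j B A = 0
  · simp [hE]
  · linear_combination (x j ^ t * E j B A) * h j B A hE

end Matrix

section ZpowSmulSums

variable {K A ι : Type*} [Field K] [Ring A] [Algebra K A] [Fintype ι] {x : ι → K}

theorem sum_zpow_smul_commutator [DecidableEq ι] {E F : ι → A}
    (hEF : ∀ i j, i ≠ j → E i * F j = F j * E i) (hx : ∀ i, x i ≠ 0) (r s : ℤ) :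
    (∑ i, x i ^ r • E i) * (∑ j, x j ^ s • F j) - (∑ j, x j ^ s • F j) * (∑ i, x i ^ r • E i) =
      ∑ i, x i ^ (r + s) • (E i * F i - F i * E i) := by
  simp_rw [sum_mul_sum, smul_mul_smul_comm]
  rw [sum_comm (s := univ) (t := univ) (f := fun j i => (x j ^ s * x i ^ r) • (F j * E i)),
    ← sum_sub_distrib]
  refine sum_congr rfl fun i _ => ?_
  rw [← sum_sub_distrib, sum_eq_single i (fun j _ hji => by
    rw [hEF i j (Ne.symm hji), mul_comm, sub_self]) (by simp), zpow_add₀ (hx i), mul_comm (x i ^ s),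
    smul_sub]

theorem quadratic_relation_of_mul_eq_smul_symm {E : ι → A} {S : ι → ι → A} {w : ι → ι → K}
    (hE : ∀ i j, E i * E j = w i j • S i j) (hS : ∀ i j, S i j = S j i) (hS0 : ∀ i, S i i = 0)
    (hx : ∀ i, x i ≠ 0) {ρ : K}
    (hw : ∀ i j, i ≠ j → w i j * (x i - ρ * x j) + w j i * (x j - ρ * x i) = 0) (r s : ℤ) :
    (∑ i, x i ^ (r + 1) • E i) * (∑ i, x i ^ s • E i) -
        ρ • ((∑ i, x i ^ r • E i) * ∑ i, x i ^ (s + 1) • E i) =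
      ρ • ((∑ i, x i ^ s • E i) * ∑ i, x i ^ (r + 1) • E i) -
        (∑ i, x i ^ (s + 1) • E i) * ∑ i, x i ^ r • E i := by
  have expand : ∀ u v : ℤ, (∑ i, x i ^ u • E i) * (∑ j, x j ^ v • E j) =
      ∑ i, ∑ j, (x i ^ u * x j ^ v * w i j) • S i j := fun u v => by
    simp_rw [sum_mul_sum, smul_mul_smul_comm, hE, smul_smul]
  rw [← sub_eq_zero, expand, expand, expand, expand]
  simp only [smul_sum, smul_smul, ← sum_sub_distrib, ← sub_smul]
  refine sum_sum_eq_zero_of_antisymm _ _ (fun i _ => by rw [hS0, smul_zero])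
    fun i _ j _ hij => ?_
  rw [hS j i, ← add_smul, zpow_add_one₀ (hx i), zpow_add_one₀ (hx j), zpow_add_one₀ (hx i),
    zpow_add_one₀ (hx j)]
  convert zero_smul K (S i j) using 2
  linear_combination (x i ^ r * x j ^ s + x i ^ s * x j ^ r) * hw i j hij

end ZpowSmulSums

namespace ThinStandardModule

section CoeffInt

variable {R : Type*} [CommRing R]

noncomputable def coeffInt (f : R⟦X⟧) (m : ℤ) : R := if 0 ≤ m then coeff m.toNat f else 0

theorem coeffInt_natCast (f : R⟦X⟧) (k : ℕ) : coeffInt f k = coeff k f := by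
  simp [coeffInt]

theorem coeffInt_of_neg (f : R⟦X⟧) {m : ℤ} (hm : m < 0) : coeffInt f m = 0 :=
  if_neg hm.not_ge

theorem coeffInt_C_sub_C_mul_X_mul (α β : R) (f : R⟦X⟧) (m : ℤ) :
    coeffInt ((C α - C β * X) * f) m = α * coeffInt f m - β * coeffInt f (m - 1) := by
  rcases m with (_ | k) | k
  · simp [coeffInt, sub_mul, mul_assoc]
  · rw [show (Int.ofNat (k + 1) : ℤ) - 1 = k by simp]
    simp only [Int.ofNat_eq_natCast, coeffInt_natCast, sub_mul, map_sub, coeff_C_mul, mul_assoc,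
      coeff_succ_X_mul]
  · simp [coeffInt_of_neg, Int.negSucc_lt_zero, Int.negSucc_sub_one]

end CoeffInt

section MobiusProd

variable {K ι : Type*} [Field K] [Fintype ι]

noncomputable def mobiusProd (c d a : ι → K) : K⟦X⟧ :=
  (∏ j, (C (c j) - C (d j * a j) * X)) * (∏ j, (1 - C (a j) * X))⁻¹

theorem constantCoeff_mobiusProd (c d a : ι → K) : constantCoeff (mobiusProd c d a) = ∏ j, c j := by
  simp [mobiusProd, map_prod]

theorem mobiusProd_exchange {c d c' d' : ι → K} (a : ι → K) {i : ι} (hc : ∀ k ≠ i, c' k = c k)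
    (hd : ∀ k ≠ i, d' k = d k) :
    (C (c' i) - C (d' i * a i) * X) * mobiusProd c d a =
      (C (c i) - C (d i * a i) * X) * mobiusProd c' d' a := by
  classical
  have hrest : ∏ k ∈ univ.erase i, (C (c' k) - C (d' k * a k) * X) =
      ∏ k ∈ univ.erase i, (C (c k) - C (d k * a k) * X) :=
    prod_congr rfl fun k hk => by rw [hc k (ne_of_mem_erase hk), hd k (ne_of_mem_erase hk)]
  simp only [mobiusProd, ← mul_prod_erase univ _ (mem_univ i), hrest]
  ring

theorem coeffInt_mobiusProd_exchange {c d c' d' : ι → K} (a : ι → K) {i : ι}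
    (hc : ∀ k ≠ i, c' k = c k) (hd : ∀ k ≠ i, d' k = d k) (m : ℤ) :
    c' i * coeffInt (mobiusProd c d a) m - d' i * a i * coeffInt (mobiusProd c d a) (m - 1) =
      c i * coeffInt (mobiusProd c' d' a) m -
        d i * a i * coeffInt (mobiusProd c' d' a) (m - 1) := by
  simpa only [coeffInt_C_sub_C_mul_X_mul] using
    congrArg (coeffInt · m) (mobiusProd_exchange a hc hd)

variable [DecidableEq ι]

/-- The coefficient of `1 / (1 - aᵢ u)` in the partial fraction expansion of `mobiusProd c d a`
(see `mobiusProd_eq_partialFractions`). -/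
def residue (c d a : ι → K) (i : ι) : K :=
  (c i - d i) * ∏ k ∈ univ.erase i, (c k * a i - d k * a k) / (a i - a k)

theorem mobiusProd_eq_partialFractions (c d : ι → K) {a : ι → K} (ha : a.Injective)
    (ha0 : ∀ i, a i ≠ 0) :
    mobiusProd c d a = C (∏ j, d j) + ∑ i, C (residue c d a i) * (1 - C (a i) * X)⁻¹ := by
  have hD : ∀ s : Finset ι, (∏ k ∈ s, (1 - C (a k) * X)) * (∏ k ∈ s, (1 - C (a k) * X))⁻¹ = 1 :=
    fun s => PowerSeries.mul_inv_cancel _ (by simp [map_prod])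
  have hDi : ∀ i, (∏ k ∈ univ.erase i, (1 - C (a k) * X)) * (∏ k, (1 - C (a k) * X))⁻¹ =
      (1 - C (a i) * X)⁻¹ := fun i => by
    rw [← mul_prod_erase univ _ (mem_univ i), PowerSeries.mul_inv_rev, ← mul_assoc, hD, one_mul]
  set φ := Polynomial.coeToPowerSeries.ringHom (R := K)
  have h := congrArg φ (Polynomial.prod_C_sub_C_mul_X_eq_partialFractions c d ha ha0)
  simp only [map_prod φ, map_add φ, map_mul φ, map_sum φ, map_sub φ, map_one φ, φ,
    Polynomial.coeToPowerSeries.ringHom_apply, Polynomial.coe_C, Polynomial.coe_X] at h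
  rw [mobiusProd, h, add_mul, mul_assoc, hD, mul_one, sum_mul]
  simp only [mul_assoc, hDi, residue]

theorem coeff_mobiusProd (c d : ι → K) {a : ι → K} (ha : a.Injective) (ha0 : ∀ i, a i ≠ 0)
    (m : ℕ) :
    coeff m (mobiusProd c d a) =
      (if m = 0 then ∏ j, d j else 0) + ∑ i, residue c d a i * a i ^ m := by
  simp only [mobiusProd_eq_partialFractions c d ha ha0, map_add, map_sum, coeff_C, coeff_C_mul,
    coeff_inv_one_sub_C_mul_X]

theorem prod_eq_prod_add_sum_residue (c d : ι → K) {a : ι → K} (ha : a.Injective)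
    (ha0 : ∀ i, a i ≠ 0) : ∏ j, c j = ∏ j, d j + ∑ i, residue c d a i := by
  simpa [← constantCoeff_mobiusProd c d a] using coeff_mobiusProd c d ha ha0 0

theorem residue_swap_inv (c d : ι → K) {a : ι → K} (ha0 : ∀ i, a i ≠ 0) (i : ι) :
    residue d c a⁻¹ i = -residue c d a i := by
  rw [residue, residue, ← neg_mul, neg_sub]
  refine congrArg _ (prod_congr rfl fun k _ => ?_)
  rw [Pi.inv_apply, Pi.inv_apply, ← mul_div_mul_right _ _ (mul_ne_zero (ha0 i) (ha0 k)),
    ← neg_div_neg_eq]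
  congr 1 <;> field_simp [ha0 i, ha0 k] <;> ring

theorem coeffInt_mobiusProd_sub (c d : ι → K) {a : ι → K} (ha : a.Injective) (ha0 : ∀ i, a i ≠ 0)
    (m : ℤ) :
    coeffInt (mobiusProd c d a) m - coeffInt (mobiusProd d c a⁻¹) (-m) =
      ∑ i, residue c d a i * a i ^ m := by
  have ha' : a⁻¹.Injective := inv_injective.comp ha
  have ha0' : ∀ i, a⁻¹ i ≠ 0 := fun i => inv_ne_zero (ha0 i)
  rcases m with (_ | k) | k
  · simp [coeffInt, coeff_mobiusProd _ _ ha ha0, coeff_mobiusProd _ _ ha' ha0',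
      residue_swap_inv c d ha0, prod_eq_prod_add_sum_residue c d ha ha0]
  · rw [Int.ofNat_eq_natCast, coeffInt_of_neg (mobiusProd d c a⁻¹) (by omega), sub_zero,
      coeffInt_natCast, coeff_mobiusProd _ _ ha ha0, if_neg k.succ_ne_zero, zero_add]
    simp [← zpow_natCast]
  · rw [coeffInt_of_neg _ (Int.negSucc_lt_zero k), zero_sub, Int.neg_negSucc, coeffInt_natCast,
      coeff_mobiusProd _ _ ha' ha0', if_neg k.succ_ne_zero, zero_add, ← sum_neg_distrib]
    refine sum_congr rfl fun i _ => ?_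
    rw [residue_swap_inv c d ha0, Int.negSucc_eq, _root_.zpow_neg, Pi.inv_apply, inv_pow]
    simp [← zpow_natCast]

end MobiusProd

section Scalars

variable {K : Type*} [Field K]

def qRatio (q x y : K) : K := (x * q - y * q⁻¹) / (x - y)

theorem qRatio_inv (q x y : K) : qRatio q⁻¹ x y = qRatio q y x := by
  rw [qRatio, qRatio, inv_inv, ← neg_div_neg_eq]
  congr 1 <;> ring

theorem qRatio_mul_add_qRatio_mul (q : K) {x y : K} (hxy : x ≠ y) :
    qRatio q x y * (x - q ^ 2 * y) + qRatio q y x * (y - q ^ 2 * x) = 0 := by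
  rcases eq_or_ne q 0 with rfl | hq
  · simp [qRatio]
  have hxy' : x - y ≠ 0 := sub_ne_zero.mpr hxy
  have hyx' : y - x ≠ 0 := sub_ne_zero.mpr hxy.symm
  rw [qRatio, qRatio]
  field_simp
  ring

end Scalars

section Operators

variable {K ι : Type*} [Field K] [DecidableEq ι] (q : K) (a : ι → K)

def qWeight (A : Finset ι) : ι → K := A.piecewise (fun _ => q⁻¹) (fun _ => q)

def cm (A : Finset ι) (j : ι) : K := ∏ k ∈ A, qRatio q (a k) (a j)

def Em (j : ι) : Matrix (Finset ι) (Finset ι) K :=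
  fun B A => if j ∉ A ∧ B = insert j A then cm q a A j else 0

def Emm (i j : ι) : Matrix (Finset ι) (Finset ι) K :=
  fun B A => if i ≠ j ∧ i ∉ A ∧ j ∉ A ∧ B = insert i (insert j A) then cm q a A i * cm q a A j
    else 0

variable {q a}

theorem cm_insert {A : Finset ι} {j : ι} (hj : j ∉ A) (i : ι) :
    cm q a (insert j A) i = qRatio q (a j) (a i) * cm q a A i := by
  rw [cm, cm, prod_insert hj]

theorem Em_ne_zero {j : ι} {B A : Finset ι} (h : Em q a j B A ≠ 0) : j ∉ A ∧ B = insert j A :=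
  of_not_not fun hc => h (if_neg hc)

theorem Emm_comm (i j : ι) : Emm q a i j = Emm q a j i := by
  ext B A
  simp only [Emm, insert_comm i j, mul_comm (cm q a A i), ne_comm (a := i)]
  congr 1
  exact propext (by tauto)

theorem Emm_self (i : ι) : Emm q a i i = 0 := by
  ext B A
  simp [Emm]

variable [Fintype ι] (q a)

def cp (A : Finset ι) (j : ι) : K := ∏ k ∈ Aᶜ, qRatio q (a j) (a k)

def Ep (j : ι) : Matrix (Finset ι) (Finset ι) K :=
  fun B A => if j ∈ A ∧ B = A.erase j then cp q a A j else 0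

def Epp (i j : ι) : Matrix (Finset ι) (Finset ι) K :=
  fun B A => if i ≠ j ∧ i ∈ A ∧ j ∈ A ∧ B = (A.erase j).erase i then cp q a A i * cp q a A j else 0

variable {q a}

theorem cp_erase {A : Finset ι} {j : ι} (hj : j ∈ A) (i : ι) :
    cp q a (A.erase j) i = qRatio q (a i) (a j) * cp q a A i := by
  rw [cp, cp, compl_erase, prod_insert (by simp [hj])]

theorem Ep_ne_zero {j : ι} {B A : Finset ι} (h : Ep q a j B A ≠ 0) : j ∈ A ∧ B = A.erase j :=
  of_not_not fun hc => h (if_neg hc)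

theorem Epp_comm (i j : ι) : Epp q a i j = Epp q a j i := by
  ext B A
  simp only [Epp, erase_right_comm (a := i), mul_comm (cp q a A i), ne_comm (a := i)]
  congr 1
  exact propext (by tauto)

theorem Epp_self (i : ι) : Epp q a i i = 0 := by
  ext B A
  simp [Epp]

theorem mul_Ep_apply (M : Matrix (Finset ι) (Finset ι) K) (j : ι) (B A : Finset ι) :
    (M * Ep q a j) B A = M B (A.erase j) * if j ∈ A then cp q a A j else 0 := by
  rw [mul_apply_of_forall_ne_eq_zero (C := A.erase j) fun C hC => by simp [Ep, hC]]
  simp [Ep]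

theorem mul_Em_apply (M : Matrix (Finset ι) (Finset ι) K) (j : ι) (B A : Finset ι) :
    (M * Em q a j) B A = M B (insert j A) * if j ∉ A then cm q a A j else 0 := by
  rw [mul_apply_of_forall_ne_eq_zero (C := insert j A) fun C hC => by simp [Em, hC]]
  simp [Em]

theorem Ep_mul_Ep (i j : ι) : Ep q a i * Ep q a j = qRatio q (a i) (a j) • Epp q a i j := by
  ext B A
  rw [mul_Ep_apply, Matrix.smul_apply, smul_eq_mul]
  by_cases hj : j ∈ A
  · by_cases hij : i = j
    · subst hij
      simp [Ep, Epp]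
    · simp only [Ep, Epp, if_pos hj, mem_erase, cp_erase hj]
      split_ifs <;> simp_all
      ring
  · simp [Epp, hj]

theorem Em_mul_Em (i j : ι) : Em q a i * Em q a j = qRatio q (a j) (a i) • Emm q a i j := by
  ext B A
  rw [mul_Em_apply, Matrix.smul_apply, smul_eq_mul]
  by_cases hj : j ∈ A
  · simp [Emm, hj]
  · by_cases hij : i = j
    · subst hij
      simp [Em, Emm]
    · simp only [Em, Emm, if_pos hj, mem_insert, cm_insert hj]
      split_ifs <;> simp_all
      ring

theorem Ep_mul_Em_of_ne {i j : ι} (hij : i ≠ j) : Ep q a i * Em q a j = Em q a j * Ep q a i := by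
  ext B A
  rw [mul_Em_apply, mul_Ep_apply]
  by_cases hi : i ∈ A
  · by_cases hj : j ∈ A
    · simp [hj, Em, hij.symm]
    · have hcp : cp q a A i = qRatio q (a i) (a j) * cp q a (insert j A) i := by
        rw [← cp_erase (mem_insert_self j A), erase_insert hj]
      have hcm : cm q a A j = qRatio q (a i) (a j) * cm q a (A.erase i) j := by
        rw [← cm_insert (notMem_erase i A), insert_erase hi]
      simp only [Ep, Em, hi, hj, mem_insert, hij, erase_insert_of_ne hij.symm, mem_erase,
        hcp, hcm]
      split_ifs <;> simp_all
      ring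
  · simp [Ep, hi, hij]

theorem prod_erase_residue_factor (A : Finset ι) (j : ι) :
    ∏ k ∈ univ.erase j, (qWeight q A k * a j - qWeight q⁻¹ A k * a k) / (a j - a k) =
      cm q a (A.erase j) j * cp q a (insert j A) j := by
  have hfactor : ∀ k, (qWeight q A k * a j - qWeight q⁻¹ A k * a k) / (a j - a k) =
      if k ∈ A then qRatio q (a k) (a j) else qRatio q (a j) (a k) := fun k => by
    by_cases hk : k ∈ A
    · rw [qWeight, qWeight, piecewise_eq_of_mem _ _ _ hk, piecewise_eq_of_mem _ _ _ hk, inv_inv,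
        if_pos hk, qRatio, ← neg_div_neg_eq]
      congr 1 <;> ring
    · rw [qWeight, qWeight, piecewise_eq_of_notMem _ _ _ hk, piecewise_eq_of_notMem _ _ _ hk,
        if_neg hk, qRatio]
      ring
  rw [prod_congr rfl fun k _ => hfactor k, prod_ite, cm, cp]
  congr 2 <;> ext k <;> simp

theorem smul_Ep_mul_Em_sub_Em_mul_Ep (j : ι) :
    (q - q⁻¹) • (Ep q a j * Em q a j - Em q a j * Ep q a j) =
      diagonal fun A => residue (qWeight q A) (qWeight q⁻¹ A) a j := by
  ext B A
  rw [Matrix.smul_apply, Matrix.sub_apply, mul_Em_apply, mul_Ep_apply, diagonal_apply, residue,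
    prod_erase_residue_factor]
  by_cases hBA : B = A
  · subst hBA
    by_cases hj : j ∈ B
    · simp [Ep, Em, qWeight, hj, insert_eq_of_mem hj]
      ring
    · simp [Ep, Em, qWeight, hj, mul_comm]
  · by_cases hj : j ∈ A <;> simp [Ep, Em, hj, hBA, erase_eq_of_notMem, insert_erase]



end Operators

variable (n : ℕ) (q : ℂ) (a : Fin n → ℂ)

section Module

variable {n q a}

theorem Xp_eq_sum (t : ℤ) : Xp n q a t = ∑ j, a j ^ t • Ep q a j := by
  ext B A
  simp only [Xp, Ep, cp, qRatio, Matrix.sum_apply, Matrix.smul_apply, smul_eq_mul, mul_ite,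
    mul_zero, ite_and, Fintype.sum_ite_mem]

theorem Xm_eq_sum (t : ℤ) : Xm n q a t = ∑ j, a j ^ t • Em q a j := by
  ext B A
  simp only [Xm, Em, cm, qRatio, Matrix.sum_apply, Matrix.smul_apply, smul_eq_mul, mul_ite,
    mul_zero, ite_and, ← mem_compl, Fintype.sum_ite_mem]

theorem Php_eq_diagonal (m : ℤ) : Php n q a m = diagonal fun A => coeffInt (gp n q a A) m := by
  ext B A
  by_cases h : B = A <;> simp [Php, coeffInt, h]

theorem Phm_eq_diagonal (m : ℤ) : Phm n q a m = diagonal fun A => coeffInt (gm n q a A) (-m) := by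
  ext B A
  by_cases h : B = A <;> simp [Phm, coeffInt, h]

theorem gp_eq_mobiusProd (A : Finset (Fin n)) :
    gp n q a A = mobiusProd (qWeight q A) (qWeight q⁻¹ A) a := by
  rw [gp, mobiusProd, ← prod_mul_prod_compl A fun j =>
    C (qWeight q A j) - C (qWeight q⁻¹ A j * a j) * X]
  congr 2 <;> refine prod_congr rfl fun j hj => ?_
  · simp [qWeight, hj]
  · simp [qWeight, mem_compl.mp hj]

theorem gm_eq_mobiusProd (A : Finset (Fin n)) :
    gm n q a A = mobiusProd (qWeight q⁻¹ A) (qWeight q A) a⁻¹ := by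
  rw [gm, mobiusProd, ← prod_mul_prod_compl A fun j =>
    C (qWeight q⁻¹ A j) - C (qWeight q A j * a⁻¹ j) * X]
  congr 2 <;> refine prod_congr rfl fun j hj => ?_
  · simp [qWeight, hj]
  · simp [qWeight, mem_compl.mp hj]

theorem coeffInt_gp_exchange {A B : Finset (Fin n)} {j : Fin n} (h : ∀ k ≠ j, k ∈ A ↔ k ∈ B)
    (m : ℤ) :
    qWeight q A j * coeffInt (gp n q a B) m -
        qWeight q⁻¹ A j * a j * coeffInt (gp n q a B) (m - 1) =
      qWeight q B j * coeffInt (gp n q a A) m -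
        qWeight q⁻¹ B j * a j * coeffInt (gp n q a A) (m - 1) := by
  rw [gp_eq_mobiusProd, gp_eq_mobiusProd]
  exact coeffInt_mobiusProd_exchange a (fun k hk => by simp [qWeight, piecewise, h k hk])
    (fun k hk => by simp [qWeight, piecewise, h k hk]) m

theorem coeffInt_gm_exchange {A B : Finset (Fin n)} {j : Fin n} (ha0 : a j ≠ 0)
    (h : ∀ k ≠ j, k ∈ A ↔ k ∈ B) (m : ℤ) :
    qWeight q A j * coeffInt (gm n q a B) (-m) -
        qWeight q⁻¹ A j * a j * coeffInt (gm n q a B) (-(m - 1)) =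
      qWeight q B j * coeffInt (gm n q a A) (-m) -
        qWeight q⁻¹ B j * a j * coeffInt (gm n q a A) (-(m - 1)) := by
  have hexch := coeffInt_mobiusProd_exchange a⁻¹ (i := j) (c := qWeight q⁻¹ B) (d := qWeight q B)
    (c' := qWeight q⁻¹ A) (d' := qWeight q A) (fun k hk => by simp [qWeight, piecewise, h k hk])
    (fun k hk => by simp [qWeight, piecewise, h k hk]) (-(m - 1))
  rw [← gm_eq_mobiusProd, ← gm_eq_mobiusProd, show -(m - 1) - 1 = -m by ring, Pi.inv_apply]
    at hexch
  linear_combination (-a j) * hexch +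
    (qWeight q B j * coeffInt (gm n q a A) (-m) - qWeight q A j * coeffInt (gm n q a B) (-m)) *
      mul_inv_cancel₀ ha0

theorem Php_Xp_relation (ha0 : ∀ i, a i ≠ 0) (m t : ℤ) :
    q⁻¹ • (Php n q a m * Xp n q a t) - q • (Php n q a (m - 1) * Xp n q a (t + 1)) =
      q • (Xp n q a t * Php n q a m) - q⁻¹ • (Xp n q a (t + 1) * Php n q a (m - 1)) := by
  simp only [Php_eq_diagonal, Xp_eq_sum]
  refine diagonal_mul_sum_zpow_smul_relation ha0 (fun j B A hE => ?_) t
  obtain ⟨hj, rfl⟩ := Ep_ne_zero hE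
  simpa [qWeight, hj] using
    coeffInt_gp_exchange (A := A) (B := A.erase j) (j := j) (fun k hk => by simp [hk]) m

theorem Phm_Xp_relation (ha0 : ∀ i, a i ≠ 0) (m t : ℤ) :
    q⁻¹ • (Phm n q a m * Xp n q a t) - q • (Phm n q a (m - 1) * Xp n q a (t + 1)) =
      q • (Xp n q a t * Phm n q a m) - q⁻¹ • (Xp n q a (t + 1) * Phm n q a (m - 1)) := by
  simp only [Phm_eq_diagonal, Xp_eq_sum]
  refine diagonal_mul_sum_zpow_smul_relation ha0 (fun j B A hE => ?_) t
  obtain ⟨hj, rfl⟩ := Ep_ne_zero hE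
  simpa [qWeight, hj] using
    coeffInt_gm_exchange (A := A) (B := A.erase j) (j := j) (ha0 j) (fun k hk => by simp [hk]) m

theorem Php_Xm_relation (ha0 : ∀ i, a i ≠ 0) (m t : ℤ) :
    q • (Php n q a m * Xm n q a t) - q⁻¹ • (Php n q a (m - 1) * Xm n q a (t + 1)) =
      q⁻¹ • (Xm n q a t * Php n q a m) - q • (Xm n q a (t + 1) * Php n q a (m - 1)) := by
  simp only [Php_eq_diagonal, Xm_eq_sum]
  refine diagonal_mul_sum_zpow_smul_relation ha0 (fun j B A hE => ?_) t
  obtain ⟨hj, rfl⟩ := Em_ne_zero hE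
  simpa [qWeight, hj] using
    coeffInt_gp_exchange (A := A) (B := insert j A) (j := j) (fun k hk => by simp [hk]) m

theorem Phm_Xm_relation (ha0 : ∀ i, a i ≠ 0) (m t : ℤ) :
    q • (Phm n q a m * Xm n q a t) - q⁻¹ • (Phm n q a (m - 1) * Xm n q a (t + 1)) =
      q⁻¹ • (Xm n q a t * Phm n q a m) - q • (Xm n q a (t + 1) * Phm n q a (m - 1)) := by
  simp only [Phm_eq_diagonal, Xm_eq_sum]
  refine diagonal_mul_sum_zpow_smul_relation ha0 (fun j B A hE => ?_) t
  obtain ⟨hj, rfl⟩ := Em_ne_zero hE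
  simpa [qWeight, hj] using
    coeffInt_gm_exchange (A := A) (B := insert j A) (j := j) (ha0 j) (fun k hk => by simp [hk]) m

theorem Php_sub_Phm (ha : a.Injective) (ha0 : ∀ i, a i ≠ 0) (m : ℤ) :
    Php n q a m - Phm n q a m =
      ∑ j, a j ^ m • (q - q⁻¹) • (Ep q a j * Em q a j - Em q a j * Ep q a j) := by
  ext B A
  simp only [Php_eq_diagonal, Phm_eq_diagonal, smul_Ep_mul_Em_sub_Em_mul_Ep, Matrix.sub_apply,
    Matrix.sum_apply, Matrix.smul_apply, diagonal_apply, smul_eq_mul]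
  by_cases hBA : B = A
  · subst hBA
    simp [gp_eq_mobiusProd, gm_eq_mobiusProd, coeffInt_mobiusProd_sub _ _ ha ha0, mul_comm]
  · simp [hBA]

theorem Xp_mul_Xm_sub_Xm_mul_Xp (ha : a.Injective) (ha0 : ∀ i, a i ≠ 0) (hq : q - q⁻¹ ≠ 0)
    (r s : ℤ) :
    Xp n q a r * Xm n q a s - Xm n q a s * Xp n q a r =
      (q - q⁻¹)⁻¹ • (Php n q a (r + s) - Phm n q a (r + s)) := by
  rw [Xp_eq_sum, Xm_eq_sum, sum_zpow_smul_commutator (fun i j hij => Ep_mul_Em_of_ne hij) ha0,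
    Php_sub_Phm ha ha0, smul_sum]
  simp only [smul_comm (q - q⁻¹)⁻¹, smul_inv_smul₀ hq]

theorem Xp_Xp_relation (ha : a.Injective) (ha0 : ∀ i, a i ≠ 0) (r s : ℤ) :
    Xp n q a (r + 1) * Xp n q a s - (q ^ 2) • (Xp n q a r * Xp n q a (s + 1)) =
      (q ^ 2) • (Xp n q a s * Xp n q a (r + 1)) - Xp n q a (s + 1) * Xp n q a r := by
  simp only [Xp_eq_sum]
  exact quadratic_relation_of_mul_eq_smul_symm Ep_mul_Ep Epp_comm Epp_self ha0
    (fun i j hij => qRatio_mul_add_qRatio_mul q (ha.ne hij)) r s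

theorem Xm_Xm_relation (ha : a.Injective) (ha0 : ∀ i, a i ≠ 0) (r s : ℤ) :
    Xm n q a (r + 1) * Xm n q a s - (q⁻¹ ^ 2) • (Xm n q a r * Xm n q a (s + 1)) =
      (q⁻¹ ^ 2) • (Xm n q a s * Xm n q a (r + 1)) - Xm n q a (s + 1) * Xm n q a r := by
  simp only [Xm_eq_sum]
  exact quadratic_relation_of_mul_eq_smul_symm Em_mul_Em Emm_comm Emm_self ha0
    (fun i j hij => by simpa only [qRatio_inv] using qRatio_mul_add_qRatio_mul q⁻¹ (ha.ne hij)) r s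

end Module

/-- the formulas of Proposition 2.9 define a representation of the
quantum loop algebra `U_q(Lsl₂)` on the `2ⁿ`-dimensional space with basis
`(V_A)_{A ⊆ {1,…,n}}`: all the defining relations of Drinfel'd's second
presentation hold coefficient-wise. -/
theorem thin_standard_module_is_representation
    (hq : q ≠ 0) (hroot : ∀ k : ℕ, 1 ≤ k → q ^ k ≠ 1)
    (ha0 : ∀ i, a i ≠ 0) (ha : Function.Injective a) :
    (∀ m k : ℤ, Php n q a m * Php n q a k = Php n q a k * Php n q a m
       ∧ Php n q a m * Phm n q a k = Phm n q a k * Php n q a m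
       ∧ Phm n q a m * Phm n q a k = Phm n q a k * Phm n q a m)
    ∧ (∀ m t : ℤ,
        q⁻¹ • (Php n q a m * Xp n q a t) - q • (Php n q a (m - 1) * Xp n q a (t + 1))
          = q • (Xp n q a t * Php n q a m) - q⁻¹ • (Xp n q a (t + 1) * Php n q a (m - 1)))
    ∧ (∀ m t : ℤ,
        q⁻¹ • (Phm n q a m * Xp n q a t) - q • (Phm n q a (m - 1) * Xp n q a (t + 1))
          = q • (Xp n q a t * Phm n q a m) - q⁻¹ • (Xp n q a (t + 1) * Phm n q a (m - 1)))
    ∧ (∀ m t : ℤ,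
        q • (Php n q a m * Xm n q a t) - q⁻¹ • (Php n q a (m - 1) * Xm n q a (t + 1))
          = q⁻¹ • (Xm n q a t * Php n q a m) - q • (Xm n q a (t + 1) * Php n q a (m - 1)))
    ∧ (∀ m t : ℤ,
        q • (Phm n q a m * Xm n q a t) - q⁻¹ • (Phm n q a (m - 1) * Xm n q a (t + 1))
          = q⁻¹ • (Xm n q a t * Phm n q a m) - q • (Xm n q a (t + 1) * Phm n q a (m - 1)))
    ∧ (∀ r s : ℤ,
        Xp n q a r * Xm n q a s - Xm n q a s * Xp n q a r
          = (q - q⁻¹)⁻¹ • (Php n q a (r + s) - Phm n q a (r + s)))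
    ∧ (∀ r s : ℤ,
        Xp n q a (r + 1) * Xp n q a s - (q ^ 2) • (Xp n q a r * Xp n q a (s + 1))
          = (q ^ 2) • (Xp n q a s * Xp n q a (r + 1)) - Xp n q a (s + 1) * Xp n q a r)
    ∧ (∀ r s : ℤ,
        Xm n q a (r + 1) * Xm n q a s - (q⁻¹ ^ 2) • (Xm n q a r * Xm n q a (s + 1))
          = (q⁻¹ ^ 2) • (Xm n q a s * Xm n q a (r + 1)) - Xm n q a (s + 1) * Xm n q a r) := by
  have hq2 : q - q⁻¹ ≠ 0 := fun h => hroot 2 one_le_two <| by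
    rw [sq, ← mul_inv_cancel₀ hq, ← sub_eq_zero.mp h]
  refine ⟨fun m k => ⟨?_, ?_, ?_⟩, Php_Xp_relation ha0, Phm_Xp_relation ha0, Php_Xm_relation ha0,
    Phm_Xm_relation ha0, Xp_mul_Xm_sub_Xm_mul_Xp ha ha0 hq2, Xp_Xp_relation ha ha0,
    Xm_Xm_relation ha ha0⟩ <;>
  simp only [Php_eq_diagonal, Phm_eq_diagonal] <;> exact (commute_diagonal _ _).eq

end ThinStandardModule
end
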